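/- arXiv:2505.22632 — 6 statements merged into one kernel-verified Lean document; each statement's English description precedes it below -/
import Mathlib

section
/- Defining V_wo = (1/π)·E_p[w₀(X)²(s(Y,X) − m₀(X))⊗²] + (1/(1−π))·E_q[m₀(X)⊗²] and V_w = (1/π)·E_p[w₀(X)²(s(Y,X) − m̃₀(X,Ŷ))⊗²] + (1/(1−π)²)·E[(1−π₀(X))²(m̃₀(X,Ŷ) − m₀(X))⊗²] + (1/(1−π))·E_q[m₀(X)⊗²], and assuming w₀(x) = (π/(1−π))·(1−π₀(x))/π₀(x), one has V_wo − V_w = (1/(1−π)²)·E[((1−π₀(X))³/π₀(X))·(m̃₀(X,Ŷ) − m₀(X))⊗²], which is symmetric positive semidefinite. -/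
open MeasureTheory

/-! Auxiliary lemmas -/

lemma my_integrable_proj {Ω : Type*} [mΩ : MeasurableSpace Ω] {μ : Measure Ω}
    {d : ℕ} {f : Ω → Fin d → ℝ} (hf : Integrable f μ) (i : Fin d) :
    Integrable (fun ω => f ω i) μ := by
  have := (ContinuousLinearMap.proj (R := ℝ) (φ := fun _ : Fin d => ℝ) i).integrable_comp hf
  simpa [ContinuousLinearMap.proj_apply] using this

lemma my_condexp_proj {Ω : Type*} {m mΩ : MeasurableSpace Ω} {μ : Measure Ω} (hm : m ≤ mΩ)
    [IsFiniteMeasure μ]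
    {d : ℕ} {f : Ω → Fin d → ℝ} (hf : Integrable f μ) (i : Fin d) :
    (fun ω => (μ[f|m]) ω i) =ᵐ[μ] μ[fun ω => f ω i|m] := by
  haveI : SigmaFinite (μ.trim hm) := inferInstance
  have hce : Integrable (μ[f|m]) μ := integrable_condExp
  refine ae_eq_condExp_of_forall_setIntegral_eq hm (my_integrable_proj hf i) ?_ ?_ ?_
  · intro A _ _
    exact (my_integrable_proj hce i).integrableOn
  · intro A hA _
    have h1 := (ContinuousLinearMap.proj (R := ℝ) (φ := fun _ : Fin d => ℝ) i).integral_comp_comm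
      (μ := μ.restrict A) hce.integrableOn
    have h2 := (ContinuousLinearMap.proj (R := ℝ) (φ := fun _ : Fin d => ℝ) i).integral_comp_comm
      (μ := μ.restrict A) hf.integrableOn
    simp only [ContinuousLinearMap.proj_apply] at h1 h2
    rw [h1, h2, setIntegral_condExp hm hf hA]
  · exact ((continuous_apply i).comp_stronglyMeasurable
      (stronglyMeasurable_condExp (m := m) (μ := μ) (f := f))).aestronglyMeasurable

/-- Tower property: replace an indicator `R` by its conditional expectation `q` under the
integral against an `m1`-measurable factor. -/
lemma my_towerA {Ω : Type*} {m1 mΩ : MeasurableSpace Ω} {μ : Measure Ω}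
    [IsProbabilityMeasure μ] (hm1 : m1 ≤ mΩ)
    (R : Ω → ℝ) (hR : Measurable R) (hRbin : ∀ ω, R ω = 0 ∨ R ω = 1)
    (q : Ω → ℝ) (hMAR : μ[R|m1] =ᵐ[μ] q)
    (h : Ω → ℝ) (hmeas : StronglyMeasurable[m1] h)
    (hint : Integrable (fun ω => R ω * h ω) μ) :
    (∫ ω, R ω * h ω ∂μ = ∫ ω, q ω * h ω ∂μ) ∧ Integrable (fun ω => q ω * h ω) μ := by
  haveI : SigmaFinite (μ.trim hm1) := inferInstance
  have hRint : Integrable R μ := by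
    refine (integrable_const (1:ℝ)).mono' hR.aestronglyMeasurable ?_
    filter_upwards with ω
    rcases hRbin ω with h | h <;> simp [h]
  have hmulint : Integrable (h * R) μ := by
    have : (h * R) = fun ω => R ω * h ω := by funext ω; simp [mul_comm]
    rw [this]; exact hint
  have hpull : μ[h * R|m1] =ᵐ[μ] h * μ[R|m1] :=
    condExp_mul_of_stronglyMeasurable_left hmeas hmulint hRint
  have hae : h * μ[R|m1] =ᵐ[μ] fun ω => q ω * h ω := by
    filter_upwards [hMAR] with ω hω
    simp only [Pi.mul_apply, hω, mul_comm]
  have heq2 : ∫ ω, R ω * h ω ∂μ = ∫ ω, q ω * h ω ∂μ := by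
    have h0 : ∫ ω, R ω * h ω ∂μ = ∫ ω, (h * R) ω ∂μ := by
      congr 1; funext ω; simp [mul_comm]
    rw [h0, ← integral_condExp hm1]
    exact integral_congr_ae (hpull.trans hae)
  exact ⟨heq2, (integrable_condExp.congr (hpull.trans hae))⟩

/-- Projection property: integrating an `m2`-measurable factor against the residual of a
conditional expectation gives zero. -/
lemma my_towerB {Ω : Type*} {m2 mΩ : MeasurableSpace Ω} {μ : Measure Ω}
    [IsProbabilityMeasure μ] (hm2 : m2 ≤ mΩ)
    {d : ℕ} (s : Ω → Fin d → ℝ) (hsInt : Integrable s μ) (j : Fin d)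
    (k : Ω → ℝ) (hk : StronglyMeasurable[m2] k)
    (hint : Integrable (fun ω => k ω * (s ω j - (μ[s|m2]) ω j)) μ) :
    ∫ ω, k ω * (s ω j - (μ[s|m2]) ω j) ∂μ = 0 := by
  haveI : SigmaFinite (μ.trim hm2) := inferInstance
  have hsj : Integrable (fun ω => s ω j) μ := my_integrable_proj hsInt j
  have hMtj : Integrable (fun ω => (μ[s|m2]) ω j) μ := my_integrable_proj integrable_condExp j
  have hMtjm : StronglyMeasurable[m2] (fun ω => (μ[s|m2]) ω j) :=
    (continuous_apply j).comp_stronglyMeasurable stronglyMeasurable_condExp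
  have hg : Integrable ((fun ω => s ω j) - fun ω => (μ[s|m2]) ω j) μ := hsj.sub hMtj
  have hmulint : Integrable (k * ((fun ω => s ω j) - fun ω => (μ[s|m2]) ω j)) μ := hint
  have hpull := condExp_mul_of_stronglyMeasurable_left hk hmulint hg
  have hzero : μ[(fun ω => s ω j) - (fun ω => (μ[s|m2]) ω j)|m2] =ᵐ[μ] 0 := by
    have h1 := condExp_sub (m := m2) hsj hMtj
    have h2 : μ[(fun ω => (μ[s|m2]) ω j)|m2] = fun ω => (μ[s|m2]) ω j :=
      condExp_of_stronglyMeasurable hm2 hMtjm hMtj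
    have h3 : μ[(fun ω => s ω j)|m2] =ᵐ[μ] fun ω => (μ[s|m2]) ω j :=
      (my_condexp_proj hm2 hsInt j).symm
    refine h1.trans ?_
    filter_upwards [h3] with ω hω
    simp only [Pi.sub_apply, h2, hω, Pi.zero_apply, sub_self]
  have : ∫ ω, k ω * (s ω j - (μ[s|m2]) ω j) ∂μ
      = ∫ ω, (k * ((fun ω => s ω j) - fun ω => (μ[s|m2]) ω j)) ω ∂μ := rfl
  rw [this, ← integral_condExp hm2]
  refine integral_eq_zero_of_ae (hpull.trans ?_)
  filter_upwards [hzero] with ω hω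
  simp only [Pi.mul_apply, hω, Pi.zero_apply, mul_zero]

/-- Cauchy–Schwarz style integrability of cross products against a nonnegative weight. -/
lemma my_prodInt {Ω : Type*} [MeasurableSpace Ω] {μ : Measure Ω} (W u v : Ω → ℝ)
    (hW : AEStronglyMeasurable W μ) (hWnn : ∀ ω, 0 ≤ W ω)
    (hu : AEStronglyMeasurable u μ) (hv : AEStronglyMeasurable v μ)
    (hu2 : Integrable (fun ω => W ω * (u ω * u ω)) μ)
    (hv2 : Integrable (fun ω => W ω * (v ω * v ω)) μ) :
    Integrable (fun ω => W ω * (u ω * v ω)) μ := by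
  refine ((hu2.add hv2).const_mul (1/2 : ℝ)).mono' (hW.mul (hu.mul hv)) ?_
  filter_upwards with ω
  have hw := hWnn ω
  have habs : |W ω * (u ω * v ω)| = W ω * |u ω * v ω| := by
    rw [abs_mul, abs_of_nonneg hw]
  have h2 : |u ω * v ω| ≤ (u ω * u ω + v ω * v ω) / 2 := by
    rw [abs_le]
    constructor <;> nlinarith [sq_nonneg (u ω + v ω), sq_nonneg (u ω - v ω)]
  calc ‖W ω * (u ω * v ω)‖ = W ω * |u ω * v ω| := habs
    _ ≤ W ω * ((u ω * u ω + v ω * v ω) / 2) := by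
        exact mul_le_mul_of_nonneg_left h2 hw
    _ = 1/2 * (W ω * (u ω * u ω) + W ω * (v ω * v ω)) := by ring

lemma my_diffInt {Ω : Type*} [MeasurableSpace Ω] {μ : Measure Ω} (W u v : Ω → ℝ)
    (hW : AEStronglyMeasurable W μ) (hWnn : ∀ ω, 0 ≤ W ω)
    (hu : AEStronglyMeasurable u μ) (hv : AEStronglyMeasurable v μ)
    (hu2 : Integrable (fun ω => W ω * (u ω * u ω)) μ)
    (hv2 : Integrable (fun ω => W ω * (v ω * v ω)) μ) :
    Integrable (fun ω => W ω * ((u ω - v ω) * (u ω - v ω))) μ := by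
  have h := my_prodInt W u v hW hWnn hu hv hu2 hv2
  have heq : (fun ω => W ω * ((u ω - v ω) * (u ω - v ω)))
      = fun ω => (W ω * (u ω * u ω) - 2 * (W ω * (u ω * v ω))) + W ω * (v ω * v ω) := by
    funext ω; ring
  rw [heq]
  exact (hu2.sub (h.const_mul 2)).add hv2

theorem stmt_5 {Ω : Type*} [MeasurableSpace Ω] (μ : Measure Ω) [IsProbabilityMeasure μ]
    {d : ℕ} (R Y X Yh : Ω → ℝ)
    (hR : Measurable R) (hY : Measurable Y) (hX : Measurable X) (hYh : Measurable Yh)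
    (hRbin : ∀ ω, R ω = 0 ∨ R ω = 1)
    (p0 : ℝ → ℝ) (hp0 : Measurable p0) (hp0mem : ∀ x, p0 x ∈ Set.Ioo (0:ℝ) 1)
    (pl : ℝ) (hpl : pl = (μ {ω | R ω = 1}).toReal) (hplmem : pl ∈ Set.Ioo (0:ℝ) 1)
    (w0 : ℝ → ℝ) (hw0 : ∀ x, w0 x = (pl / (1 - pl)) * ((1 - p0 x) / p0 x))
    (hMAR : μ[R | MeasurableSpace.comap (fun ω => (Y ω, Yh ω, X ω)) inferInstance]
      =ᵐ[μ] fun ω => p0 (X ω))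
    (s0 : ℝ → ℝ → Fin d → ℝ) (hs0 : Measurable (Function.uncurry s0))
    (s mt m0 : Ω → Fin d → ℝ) (hs : s = fun ω => s0 (Y ω) (X ω))
    (hsL2 : MemLp s 2 μ)
    (hmt : mt =ᵐ[μ] μ[s | MeasurableSpace.comap (fun ω => (X ω, Yh ω)) inferInstance])
    (hm0 : m0 =ᵐ[μ] μ[s | MeasurableSpace.comap X inferInstance])
    (hI1 : ∀ i j, Integrable
      (fun ω => R ω * (w0 (X ω))^2 * ((s ω i - m0 ω i) * (s ω j - m0 ω j))) μ)
    (hI2 : ∀ i j, Integrable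
      (fun ω => R ω * (w0 (X ω))^2 * ((s ω i - mt ω i) * (s ω j - mt ω j))) μ)
    (hI3 : ∀ i j, Integrable
      (fun ω => (1 - p0 (X ω))^2 * ((mt ω i - m0 ω i) * (mt ω j - m0 ω j))) μ)
    (hI4 : ∀ i j, Integrable (fun ω => (1 - R ω) * (m0 ω i * m0 ω j)) μ)
    (hI5 : ∀ i j, Integrable
      (fun ω => ((1 - p0 (X ω))^3 / p0 (X ω)) * ((mt ω i - m0 ω i) * (mt ω j - m0 ω j))) μ) :
    (∀ i j,
      ((1/pl) * ((1/pl) * ∫ ω, R ω * (w0 (X ω))^2 * ((s ω i - m0 ω i) * (s ω j - m0 ω j)) ∂μ)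
        + (1/(1-pl)) * ((1/(1-pl)) * ∫ ω, (1 - R ω) * (m0 ω i * m0 ω j) ∂μ))
      - ((1/pl) * ((1/pl) * ∫ ω, R ω * (w0 (X ω))^2 * ((s ω i - mt ω i) * (s ω j - mt ω j)) ∂μ)
        + (1/(1-pl)^2) * ∫ ω, (1 - p0 (X ω))^2 * ((mt ω i - m0 ω i) * (mt ω j - m0 ω j)) ∂μ
        + (1/(1-pl)) * ((1/(1-pl)) * ∫ ω, (1 - R ω) * (m0 ω i * m0 ω j) ∂μ))
      = (1/(1-pl)^2) * ∫ ω, ((1 - p0 (X ω))^3 / p0 (X ω))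
          * ((mt ω i - m0 ω i) * (mt ω j - m0 ω j)) ∂μ)
    ∧ Matrix.PosSemidef (Matrix.of fun i j =>
        (1/(1-pl)^2) * ∫ ω, ((1 - p0 (X ω))^3 / p0 (X ω))
          * ((mt ω i - m0 ω i) * (mt ω j - m0 ω j)) ∂μ) := by
  have hm1 := (hY.prodMk (hYh.prodMk hX)).comap_le
  have hm2 := (hX.prodMk hYh).comap_le
  have h32 : MeasurableSpace.comap X inferInstance
      ≤ MeasurableSpace.comap (fun ω => (X ω, Yh ω)) inferInstance := by
    have hXeq : MeasurableSpace.comap X (inferInstance : MeasurableSpace ℝ)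
        = MeasurableSpace.comap (fun ω => (X ω, Yh ω))
            (MeasurableSpace.comap Prod.fst inferInstance) := by
      rw [MeasurableSpace.comap_comp]; rfl
    rw [hXeq]
    exact MeasurableSpace.comap_mono measurable_fst.comap_le
  have h21 : MeasurableSpace.comap (fun ω => (X ω, Yh ω)) inferInstance
      ≤ MeasurableSpace.comap (fun ω => (Y ω, Yh ω, X ω)) inferInstance := by
    have hXeq : MeasurableSpace.comap (fun ω => (X ω, Yh ω))
          (inferInstance : MeasurableSpace (ℝ × ℝ))
        = MeasurableSpace.comap (fun ω => (Y ω, Yh ω, X ω))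
            (MeasurableSpace.comap (fun p : ℝ × ℝ × ℝ => (p.2.2, p.2.1)) inferInstance) := by
      rw [MeasurableSpace.comap_comp]; rfl
    rw [hXeq]
    exact MeasurableSpace.comap_mono (measurable_snd.snd.prodMk measurable_snd.fst).comap_le
  have hX1 : Measurable[MeasurableSpace.comap (fun ω => (Y ω, Yh ω, X ω)) inferInstance] X :=
    measurable_snd.snd.comp (comap_measurable _)
  have hX2 : Measurable[MeasurableSpace.comap (fun ω => (X ω, Yh ω)) inferInstance] X :=
    measurable_fst.comp (comap_measurable _)
  have hYX1 : Measurable[MeasurableSpace.comap (fun ω => (Y ω, Yh ω, X ω)) inferInstance]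
      (fun ω => (Y ω, X ω)) :=
    (measurable_fst.prodMk measurable_snd.snd).comp (comap_measurable _)
  have hs1 : ∀ j, Measurable[MeasurableSpace.comap (fun ω => (Y ω, Yh ω, X ω)) inferInstance]
      (fun ω => s ω j) := fun j => by
    rw [hs]; exact ((measurable_pi_apply j).comp hs0).comp hYX1
  have hsM : ∀ j, Measurable fun ω => s ω j := fun j => by
    rw [hs]; exact ((measurable_pi_apply j).comp hs0).comp (hY.prodMk hX)
  have hw0m : Measurable w0 := by
    have hfun : w0 = fun x => (pl / (1 - pl)) * ((1 - p0 x) / p0 x) := funext hw0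
    rw [hfun]
    exact measurable_const.mul ((measurable_const.sub hp0).div hp0)
  set Mt : Ω → Fin d → ℝ :=
    μ[s|MeasurableSpace.comap (fun ω => (X ω, Yh ω)) inferInstance] with hMtdef
  set M0 : Ω → Fin d → ℝ :=
    μ[s|MeasurableSpace.comap X inferInstance] with hM0def
  have hsInt : Integrable s μ := hsL2.integrable one_le_two
  have hmtc : ∀ i, (fun ω => mt ω i) =ᵐ[μ] fun ω => Mt ω i := fun i =>
    hmt.mono fun ω h => congrFun h i
  have hm0c : ∀ i, (fun ω => m0 ω i) =ᵐ[μ] fun ω => M0 ω i := fun i =>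
    hm0.mono fun ω h => congrFun h i
  have hMtS : ∀ i, StronglyMeasurable[MeasurableSpace.comap (fun ω => (X ω, Yh ω)) inferInstance]
      (fun ω => Mt ω i) := fun i => by
    rw [hMtdef]; exact (continuous_apply i).comp_stronglyMeasurable stronglyMeasurable_condExp
  have hM0S : ∀ i, StronglyMeasurable[MeasurableSpace.comap X inferInstance]
      (fun ω => M0 ω i) := fun i => by
    rw [hM0def]; exact (continuous_apply i).comp_stronglyMeasurable stronglyMeasurable_condExp
  have hMtInt : ∀ i, Integrable (fun ω => Mt ω i) μ := fun i => by
    rw [hMtdef]; exact my_integrable_proj integrable_condExp i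
  have hM0Int : ∀ i, Integrable (fun ω => M0 ω i) μ := fun i => by
    rw [hM0def]; exact my_integrable_proj integrable_condExp i
  have hMtA : ∀ i, AEStronglyMeasurable (fun ω => Mt ω i) μ := fun i => (hMtInt i).1
  have hM0A : ∀ i, AEStronglyMeasurable (fun ω => M0 ω i) μ := fun i => (hM0Int i).1
  have hsjA : ∀ i, AEStronglyMeasurable (fun ω => s ω i) μ := fun i => (hsM i).aestronglyMeasurable
  have hWnn : ∀ ω, 0 ≤ R ω * w0 (X ω) ^ 2 := fun ω =>
    mul_nonneg (by rcases hRbin ω with h | h <;> simp [h]) (sq_nonneg _)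
  have hWA : AEStronglyMeasurable (fun ω => R ω * w0 (X ω) ^ 2) μ :=
    (hR.mul ((hw0m.comp hX).pow_const 2)).aestronglyMeasurable
  -- transferred integrabilities
  have hI1' : ∀ i j, Integrable
      (fun ω => R ω * w0 (X ω) ^ 2 * ((s ω i - M0 ω i) * (s ω j - M0 ω j))) μ := fun i j =>
    (hI1 i j).congr (by filter_upwards [hm0c i, hm0c j] with ω h1 h2; rw [h1, h2])
  have hI2' : ∀ i j, Integrable
      (fun ω => R ω * w0 (X ω) ^ 2 * ((s ω i - Mt ω i) * (s ω j - Mt ω j))) μ := fun i j =>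
    (hI2 i j).congr (by filter_upwards [hmtc i, hmtc j] with ω h1 h2; rw [h1, h2])
  have hI3' : ∀ i j, Integrable
      (fun ω => (1 - p0 (X ω)) ^ 2 * ((Mt ω i - M0 ω i) * (Mt ω j - M0 ω j))) μ := fun i j =>
    (hI3 i j).congr (by
      filter_upwards [hmtc i, hmtc j, hm0c i, hm0c j] with ω h1 h2 h3 h4; rw [h1, h2, h3, h4])
  have hI5' : ∀ i j, Integrable
      (fun ω => ((1 - p0 (X ω)) ^ 3 / p0 (X ω)) * ((Mt ω i - M0 ω i) * (Mt ω j - M0 ω j))) μ :=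
    fun i j => (hI5 i j).congr (by
      filter_upwards [hmtc i, hmtc j, hm0c i, hm0c j] with ω h1 h2 h3 h4; rw [h1, h2, h3, h4])
  -- integral transfers
  have hE1 : ∀ i j, ∫ ω, R ω * w0 (X ω) ^ 2 * ((s ω i - m0 ω i) * (s ω j - m0 ω j)) ∂μ
      = ∫ ω, R ω * w0 (X ω) ^ 2 * ((s ω i - M0 ω i) * (s ω j - M0 ω j)) ∂μ := fun i j =>
    integral_congr_ae (by filter_upwards [hm0c i, hm0c j] with ω h1 h2; rw [h1, h2])
  have hE2 : ∀ i j, ∫ ω, R ω * w0 (X ω) ^ 2 * ((s ω i - mt ω i) * (s ω j - mt ω j)) ∂μ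
      = ∫ ω, R ω * w0 (X ω) ^ 2 * ((s ω i - Mt ω i) * (s ω j - Mt ω j)) ∂μ := fun i j =>
    integral_congr_ae (by filter_upwards [hmtc i, hmtc j] with ω h1 h2; rw [h1, h2])
  have hE3 : ∀ i j, ∫ ω, (1 - p0 (X ω)) ^ 2 * ((mt ω i - m0 ω i) * (mt ω j - m0 ω j)) ∂μ
      = ∫ ω, (1 - p0 (X ω)) ^ 2 * ((Mt ω i - M0 ω i) * (Mt ω j - M0 ω j)) ∂μ := fun i j =>
    integral_congr_ae (by
      filter_upwards [hmtc i, hmtc j, hm0c i, hm0c j] with ω h1 h2 h3 h4; rw [h1, h2, h3, h4])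
  have hE5 : ∀ i j, ∫ ω, ((1 - p0 (X ω)) ^ 3 / p0 (X ω)) * ((mt ω i - m0 ω i) * (mt ω j - m0 ω j)) ∂μ
      = ∫ ω, ((1 - p0 (X ω)) ^ 3 / p0 (X ω)) * ((Mt ω i - M0 ω i) * (Mt ω j - M0 ω j)) ∂μ :=
    fun i j => integral_congr_ae (by
      filter_upwards [hmtc i, hmtc j, hm0c i, hm0c j] with ω h1 h2 h3 h4; rw [h1, h2, h3, h4])
  -- quadratic integrabilities
  have hDD : ∀ i, Integrable
      (fun ω => R ω * w0 (X ω) ^ 2 * ((Mt ω i - M0 ω i) * (Mt ω i - M0 ω i))) μ := fun i => by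
    have h := my_diffInt (fun ω => R ω * w0 (X ω) ^ 2)
      (fun ω => s ω i - M0 ω i) (fun ω => s ω i - Mt ω i) hWA hWnn
      ((hsjA i).sub (hM0A i)) ((hsjA i).sub (hMtA i)) (hI1' i i) (hI2' i i)
    exact h.congr (Filter.Eventually.of_forall fun ω => by ring)
  have hQ : ∀ i j, Integrable
      (fun ω => R ω * w0 (X ω) ^ 2 * ((Mt ω i - M0 ω i) * (Mt ω j - M0 ω j))) μ := fun i j =>
    my_prodInt _ _ _ hWA hWnn ((hMtA i).sub (hM0A i)) ((hMtA j).sub (hM0A j)) (hDD i) (hDD j)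
  have hC1 : ∀ i j, Integrable
      (fun ω => R ω * w0 (X ω) ^ 2 * ((Mt ω i - M0 ω i) * (s ω j - Mt ω j))) μ := fun i j =>
    my_prodInt _ _ _ hWA hWnn ((hMtA i).sub (hM0A i)) ((hsjA j).sub (hMtA j)) (hDD i) (hI2' j j)
  have hC2 : ∀ i j, Integrable
      (fun ω => R ω * w0 (X ω) ^ 2 * ((s ω i - Mt ω i) * (Mt ω j - M0 ω j))) μ := fun i j =>
    my_prodInt _ _ _ hWA hWnn ((hsjA i).sub (hMtA i)) ((hMtA j).sub (hM0A j)) (hI2' i i) (hDD j)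
  -- decomposition
  have hsplit : ∀ i j, ∫ ω, R ω * w0 (X ω) ^ 2 * ((s ω i - M0 ω i) * (s ω j - M0 ω j)) ∂μ
      = ∫ ω, R ω * w0 (X ω) ^ 2 * ((s ω i - Mt ω i) * (s ω j - Mt ω j)) ∂μ
        + ∫ ω, R ω * w0 (X ω) ^ 2 * ((Mt ω i - M0 ω i) * (s ω j - Mt ω j)) ∂μ
        + ∫ ω, R ω * w0 (X ω) ^ 2 * ((s ω i - Mt ω i) * (Mt ω j - M0 ω j)) ∂μ
        + ∫ ω, R ω * w0 (X ω) ^ 2 * ((Mt ω i - M0 ω i) * (Mt ω j - M0 ω j)) ∂μ := fun i j => by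
    have hfun : (fun ω => R ω * w0 (X ω) ^ 2 * ((s ω i - M0 ω i) * (s ω j - M0 ω j)))
        = fun ω => (R ω * w0 (X ω) ^ 2 * ((s ω i - Mt ω i) * (s ω j - Mt ω j))
            + R ω * w0 (X ω) ^ 2 * ((Mt ω i - M0 ω i) * (s ω j - Mt ω j)))
            + (R ω * w0 (X ω) ^ 2 * ((s ω i - Mt ω i) * (Mt ω j - M0 ω j))
            + R ω * w0 (X ω) ^ 2 * ((Mt ω i - M0 ω i) * (Mt ω j - M0 ω j))) := by
      funext ω; ring
    rw [hfun,
      integral_add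
        (show Integrable (fun ω => R ω * w0 (X ω) ^ 2 * ((s ω i - Mt ω i) * (s ω j - Mt ω j))
            + R ω * w0 (X ω) ^ 2 * ((Mt ω i - M0 ω i) * (s ω j - Mt ω j))) μ from
          (hI2' i j).add (hC1 i j))
        (show Integrable (fun ω => R ω * w0 (X ω) ^ 2 * ((s ω i - Mt ω i) * (Mt ω j - M0 ω j))
            + R ω * w0 (X ω) ^ 2 * ((Mt ω i - M0 ω i) * (Mt ω j - M0 ω j))) μ from
          (hC2 i j).add (hQ i j)),
      integral_add (hI2' i j) (hC1 i j), integral_add (hC2 i j) (hQ i j)]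
    ring
  -- cross terms vanish
  have hcross1 : ∀ i j,
      ∫ ω, R ω * w0 (X ω) ^ 2 * ((Mt ω i - M0 ω i) * (s ω j - Mt ω j)) ∂μ = 0 := fun i j => by
    have hh : StronglyMeasurable[MeasurableSpace.comap (fun ω => (Y ω, Yh ω, X ω)) inferInstance]
        (fun ω => w0 (X ω) ^ 2 * ((Mt ω i - M0 ω i) * (s ω j - Mt ω j))) :=
      Measurable.stronglyMeasurable
        (((hw0m.comp hX1).pow_const 2).mul
          (((((hMtS i).mono h21).measurable).sub
              (((hM0S i).mono (h32.trans h21)).measurable)).mul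
            ((hs1 j).sub ((hMtS j).mono h21).measurable)))
    have hint : Integrable
        (fun ω => R ω * (w0 (X ω) ^ 2 * ((Mt ω i - M0 ω i) * (s ω j - Mt ω j)))) μ :=
      (hC1 i j).congr (Filter.Eventually.of_forall fun ω => by ring)
    obtain ⟨heq, hpint⟩ := my_towerA hm1 R hR hRbin _ hMAR _ hh hint
    have hk : StronglyMeasurable[MeasurableSpace.comap (fun ω => (X ω, Yh ω)) inferInstance]
        (fun ω => p0 (X ω) * (w0 (X ω) ^ 2 * (Mt ω i - M0 ω i))) :=
      Measurable.stronglyMeasurable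
        ((hp0.comp hX2).mul (((hw0m.comp hX2).pow_const 2).mul
          ((hMtS i).measurable.sub ((hM0S i).mono h32).measurable)))
    have hkint : Integrable
        (fun ω => (p0 (X ω) * (w0 (X ω) ^ 2 * (Mt ω i - M0 ω i))) * (s ω j - Mt ω j)) μ :=
      hpint.congr (Filter.Eventually.of_forall fun ω => by ring)
    have h0 : ∫ ω, (p0 (X ω) * (w0 (X ω) ^ 2 * (Mt ω i - M0 ω i))) * (s ω j - Mt ω j) ∂μ = 0 :=
      my_towerB hm2 s hsInt j _ hk hkint
    calc ∫ ω, R ω * w0 (X ω) ^ 2 * ((Mt ω i - M0 ω i) * (s ω j - Mt ω j)) ∂μ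
        = ∫ ω, R ω * (w0 (X ω) ^ 2 * ((Mt ω i - M0 ω i) * (s ω j - Mt ω j))) ∂μ :=
          integral_congr_ae (Filter.Eventually.of_forall fun ω => by ring)
      _ = ∫ ω, p0 (X ω) * (w0 (X ω) ^ 2 * ((Mt ω i - M0 ω i) * (s ω j - Mt ω j))) ∂μ := heq
      _ = ∫ ω, (p0 (X ω) * (w0 (X ω) ^ 2 * (Mt ω i - M0 ω i))) * (s ω j - Mt ω j) ∂μ :=
          integral_congr_ae (Filter.Eventually.of_forall fun ω => by ring)
      _ = 0 := h0
  have hcross2 : ∀ i j,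
      ∫ ω, R ω * w0 (X ω) ^ 2 * ((s ω i - Mt ω i) * (Mt ω j - M0 ω j)) ∂μ = 0 := fun i j => by
    have hh : StronglyMeasurable[MeasurableSpace.comap (fun ω => (Y ω, Yh ω, X ω)) inferInstance]
        (fun ω => w0 (X ω) ^ 2 * ((s ω i - Mt ω i) * (Mt ω j - M0 ω j))) :=
      Measurable.stronglyMeasurable
        (((hw0m.comp hX1).pow_const 2).mul
          (((hs1 i).sub ((hMtS i).mono h21).measurable).mul
            ((((hMtS j).mono h21).measurable).sub
              (((hM0S j).mono (h32.trans h21)).measurable))))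
    have hint : Integrable
        (fun ω => R ω * (w0 (X ω) ^ 2 * ((s ω i - Mt ω i) * (Mt ω j - M0 ω j)))) μ :=
      (hC2 i j).congr (Filter.Eventually.of_forall fun ω => by ring)
    obtain ⟨heq, hpint⟩ := my_towerA hm1 R hR hRbin _ hMAR _ hh hint
    have hk : StronglyMeasurable[MeasurableSpace.comap (fun ω => (X ω, Yh ω)) inferInstance]
        (fun ω => p0 (X ω) * (w0 (X ω) ^ 2 * (Mt ω j - M0 ω j))) :=
      Measurable.stronglyMeasurable
        ((hp0.comp hX2).mul (((hw0m.comp hX2).pow_const 2).mul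
          ((hMtS j).measurable.sub ((hM0S j).mono h32).measurable)))
    have hkint : Integrable
        (fun ω => (p0 (X ω) * (w0 (X ω) ^ 2 * (Mt ω j - M0 ω j))) * (s ω i - Mt ω i)) μ :=
      hpint.congr (Filter.Eventually.of_forall fun ω => by ring)
    have h0 : ∫ ω, (p0 (X ω) * (w0 (X ω) ^ 2 * (Mt ω j - M0 ω j))) * (s ω i - Mt ω i) ∂μ = 0 :=
      my_towerB hm2 s hsInt i _ hk hkint
    calc ∫ ω, R ω * w0 (X ω) ^ 2 * ((s ω i - Mt ω i) * (Mt ω j - M0 ω j)) ∂μ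
        = ∫ ω, R ω * (w0 (X ω) ^ 2 * ((s ω i - Mt ω i) * (Mt ω j - M0 ω j))) ∂μ :=
          integral_congr_ae (Filter.Eventually.of_forall fun ω => by ring)
      _ = ∫ ω, p0 (X ω) * (w0 (X ω) ^ 2 * ((s ω i - Mt ω i) * (Mt ω j - M0 ω j))) ∂μ := heq
      _ = ∫ ω, (p0 (X ω) * (w0 (X ω) ^ 2 * (Mt ω j - M0 ω j))) * (s ω i - Mt ω i) ∂μ :=
          integral_congr_ae (Filter.Eventually.of_forall fun ω => by ring)
      _ = 0 := h0
  have hpl0 : pl ≠ 0 := ne_of_gt hplmem.1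
  have hpl1 : (1 : ℝ) - pl ≠ 0 := by
    have := hplmem.2; intro h; nlinarith
  -- square term
  have hsq : ∀ i j, ∫ ω, R ω * w0 (X ω) ^ 2 * ((Mt ω i - M0 ω i) * (Mt ω j - M0 ω j)) ∂μ
      = (pl / (1 - pl)) ^ 2
        * (∫ ω, (1 - p0 (X ω)) ^ 2 * ((Mt ω i - M0 ω i) * (Mt ω j - M0 ω j)) ∂μ
          + ∫ ω, ((1 - p0 (X ω)) ^ 3 / p0 (X ω)) * ((Mt ω i - M0 ω i) * (Mt ω j - M0 ω j)) ∂μ) :=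
    fun i j => by
    have hh : StronglyMeasurable[MeasurableSpace.comap (fun ω => (Y ω, Yh ω, X ω)) inferInstance]
        (fun ω => w0 (X ω) ^ 2 * ((Mt ω i - M0 ω i) * (Mt ω j - M0 ω j))) :=
      Measurable.stronglyMeasurable
        (((hw0m.comp hX1).pow_const 2).mul
          (((((hMtS i).mono h21).measurable).sub
              (((hM0S i).mono (h32.trans h21)).measurable)).mul
            ((((hMtS j).mono h21).measurable).sub
              (((hM0S j).mono (h32.trans h21)).measurable))))
    have hint : Integrable
        (fun ω => R ω * (w0 (X ω) ^ 2 * ((Mt ω i - M0 ω i) * (Mt ω j - M0 ω j)))) μ :=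
      (hQ i j).congr (Filter.Eventually.of_forall fun ω => by ring)
    obtain ⟨heq, hpint⟩ := my_towerA hm1 R hR hRbin _ hMAR _ hh hint
    have hpoint : ∀ ω, p0 (X ω) * (w0 (X ω) ^ 2 * ((Mt ω i - M0 ω i) * (Mt ω j - M0 ω j)))
        = (pl / (1 - pl)) ^ 2
          * ((1 - p0 (X ω)) ^ 2 * ((Mt ω i - M0 ω i) * (Mt ω j - M0 ω j))
            + ((1 - p0 (X ω)) ^ 3 / p0 (X ω)) * ((Mt ω i - M0 ω i) * (Mt ω j - M0 ω j))) :=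
      fun ω => by
      have hx0 : p0 (X ω) ≠ 0 := ne_of_gt (hp0mem (X ω)).1
      rw [hw0 (X ω)]
      field_simp
      ring
    calc ∫ ω, R ω * w0 (X ω) ^ 2 * ((Mt ω i - M0 ω i) * (Mt ω j - M0 ω j)) ∂μ
        = ∫ ω, R ω * (w0 (X ω) ^ 2 * ((Mt ω i - M0 ω i) * (Mt ω j - M0 ω j))) ∂μ :=
          integral_congr_ae (Filter.Eventually.of_forall fun ω => by ring)
      _ = ∫ ω, p0 (X ω) * (w0 (X ω) ^ 2 * ((Mt ω i - M0 ω i) * (Mt ω j - M0 ω j))) ∂μ := heq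
      _ = ∫ ω, (pl / (1 - pl)) ^ 2
            * ((1 - p0 (X ω)) ^ 2 * ((Mt ω i - M0 ω i) * (Mt ω j - M0 ω j))
              + ((1 - p0 (X ω)) ^ 3 / p0 (X ω)) * ((Mt ω i - M0 ω i) * (Mt ω j - M0 ω j))) ∂μ :=
          integral_congr_ae (Filter.Eventually.of_forall hpoint)
      _ = (pl / (1 - pl)) ^ 2
            * ∫ ω, ((1 - p0 (X ω)) ^ 2 * ((Mt ω i - M0 ω i) * (Mt ω j - M0 ω j))
              + ((1 - p0 (X ω)) ^ 3 / p0 (X ω)) * ((Mt ω i - M0 ω i) * (Mt ω j - M0 ω j))) ∂μ :=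
          integral_const_mul _ _
      _ = (pl / (1 - pl)) ^ 2
            * (∫ ω, (1 - p0 (X ω)) ^ 2 * ((Mt ω i - M0 ω i) * (Mt ω j - M0 ω j)) ∂μ
              + ∫ ω, ((1 - p0 (X ω)) ^ 3 / p0 (X ω)) * ((Mt ω i - M0 ω i) * (Mt ω j - M0 ω j)) ∂μ) := by
          rw [integral_add (hI3' i j) (hI5' i j)]
  constructor
  · intro i j
    rw [hE1 i j, hE2 i j, hE3 i j, hE5 i j, hsplit i j, hcross1 i j, hcross2 i j, hsq i j]
    field_simp
    ring
  · -- PSD part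
    have hnn : ∀ ω, 0 ≤ (1 - p0 (X ω)) ^ 3 / p0 (X ω) := fun ω =>
      div_nonneg (pow_nonneg (by have := (hp0mem (X ω)).2; linarith) 3)
        (le_of_lt (hp0mem (X ω)).1)
    refine Matrix.posSemidef_iff_dotProduct_mulVec.mpr ⟨?_, ?_⟩
    · -- symmetry
      apply Matrix.ext
      intro i j
      simp only [Matrix.conjTranspose_apply, Matrix.of_apply, star_trivial]
      congr 1
      exact integral_congr_ae (Filter.Eventually.of_forall fun ω => by ring)
    · intro x
      have hint' : ∀ i j : Fin d, Integrable (fun ω => (x i * x j)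
          * (((1 - p0 (X ω)) ^ 3 / p0 (X ω)) * ((mt ω i - m0 ω i) * (mt ω j - m0 ω j)))) μ :=
        fun i j => (hI5 i j).const_mul _
      have hpt : ∀ ω : Ω, ∑ i : Fin d, ∑ j : Fin d, (x i * x j)
            * (((1 - p0 (X ω)) ^ 3 / p0 (X ω)) * ((mt ω i - m0 ω i) * (mt ω j - m0 ω j)))
          = ((1 - p0 (X ω)) ^ 3 / p0 (X ω)) * (∑ i : Fin d, x i * (mt ω i - m0 ω i)) ^ 2 :=
        fun ω => by
        rw [sq, Finset.sum_mul_sum, Finset.mul_sum]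
        refine Finset.sum_congr rfl fun i _ => ?_
        rw [Finset.mul_sum]
        exact Finset.sum_congr rfl fun j _ => by ring
      have hstep : (∑ i : Fin d, x i * ∑ j : Fin d,
            ((1/(1-pl)^2) * ∫ ω, ((1 - p0 (X ω))^3 / p0 (X ω))
              * ((mt ω i - m0 ω i) * (mt ω j - m0 ω j)) ∂μ) * x j)
          = (1/(1-pl)^2) * ∫ ω, ((1 - p0 (X ω)) ^ 3 / p0 (X ω))
              * (∑ i : Fin d, x i * (mt ω i - m0 ω i)) ^ 2 ∂μ := by
        calc (∑ i : Fin d, x i * ∑ j : Fin d,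
              ((1/(1-pl)^2) * ∫ ω, ((1 - p0 (X ω))^3 / p0 (X ω))
                * ((mt ω i - m0 ω i) * (mt ω j - m0 ω j)) ∂μ) * x j)
            = ∑ i : Fin d, ∑ j : Fin d, (1/(1-pl)^2) * ∫ ω, (x i * x j)
                * (((1 - p0 (X ω)) ^ 3 / p0 (X ω))
                  * ((mt ω i - m0 ω i) * (mt ω j - m0 ω j))) ∂μ := by
              refine Finset.sum_congr rfl fun i _ => ?_
              rw [Finset.mul_sum]
              refine Finset.sum_congr rfl fun j _ => ?_
              rw [integral_const_mul]
              ring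
          _ = (1/(1-pl)^2) * ∑ i : Fin d, ∑ j : Fin d, ∫ ω, (x i * x j)
                * (((1 - p0 (X ω)) ^ 3 / p0 (X ω))
                  * ((mt ω i - m0 ω i) * (mt ω j - m0 ω j))) ∂μ := by
              rw [Finset.mul_sum]
              exact Finset.sum_congr rfl fun i _ => (Finset.mul_sum _ _ _).symm
          _ = (1/(1-pl)^2) * ∑ i : Fin d, ∫ ω, ∑ j : Fin d, (x i * x j)
                * (((1 - p0 (X ω)) ^ 3 / p0 (X ω))
                  * ((mt ω i - m0 ω i) * (mt ω j - m0 ω j))) ∂μ := by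
              congr 1
              exact Finset.sum_congr rfl fun i _ =>
                (integral_finset_sum _ fun j _ => hint' i j).symm
          _ = (1/(1-pl)^2) * ∫ ω, ∑ i : Fin d, ∑ j : Fin d, (x i * x j)
                * (((1 - p0 (X ω)) ^ 3 / p0 (X ω))
                  * ((mt ω i - m0 ω i) * (mt ω j - m0 ω j))) ∂μ := by
              congr 1
              exact (integral_finset_sum _ fun i _ =>
                integrable_finset_sum _ fun j _ => hint' i j).symm
          _ = (1/(1-pl)^2) * ∫ ω, ((1 - p0 (X ω)) ^ 3 / p0 (X ω))
                * (∑ i : Fin d, x i * (mt ω i - m0 ω i)) ^ 2 ∂μ := by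
              congr 1
              exact integral_congr_ae (Filter.Eventually.of_forall hpt)
      have key : (0:ℝ) ≤ ∑ i : Fin d, x i * ∑ j : Fin d,
            ((1/(1-pl)^2) * ∫ ω, ((1 - p0 (X ω))^3 / p0 (X ω))
              * ((mt ω i - m0 ω i) * (mt ω j - m0 ω j)) ∂μ) * x j := by
        rw [hstep]
        exact mul_nonneg (by positivity)
          (integral_nonneg fun ω => mul_nonneg (hnn ω) (sq_nonneg _))
      simpa only [dotProduct, Matrix.mulVec, Matrix.of_apply, Pi.star_apply,
        star_trivial] using key
end

section
/- Let (R, Y, X, Ŷ) satisfy P(R=1 | Y, Ŷ, X) = π₀(X) with π₀(X) ∈ (0,1) a.s., let π = P(R=1), and w₀(x) = (π/(1−π))·(1−π₀(x))/π₀(x). Let s(Y,X) be integrable ℝᵈ-valued, m̃₀(x,ŷ) = E[s|X=x,Ŷ=ŷ], m₀(x) = E[s|X=x]. Then the influence-type function φ = (R/π)·w₀(X)·(s(Y,X) − m̃₀(X,Ŷ)) + (w₀(X)/(π + (1−π)w₀(X)))·(m̃₀(X,Ŷ) − m₀(X)) + ((1−R)/(1−π))·m₀(X) satisfies E[φ]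 = E_q[s(Y,X)], where E_q denotes expectation in the unlabeled (R=0) population. -/
/-!
Conditioning on `σ(Y, Ŷ, X)` replaces the labelling indicator `R` by `π₀(X)` (missingness at
random), since every other factor of `φ` is a function of `(Y, Ŷ, X)`. After this replacement the
inverse-probability weight and the augmentation weight both become `(1 - π₀(X)) / (1 - π)`, so the
three terms of `φ` telescope to `(1 - π₀(X)) • s / (1 - π)`. Conditioning `(1 - R) • s` on the same
σ-algebra gives `(1 - π₀(X)) • s` as well.
-/

open MeasureTheory

section ConditionalReplacement

variable {Ω E : Type*} {m mΩ : MeasurableSpace Ω} {μ : Measure Ω}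
  [NormedAddCommGroup E] [NormedSpace ℝ E] [CompleteSpace E] {R q : Ω → ℝ}

theorem integral_smul_add_eq_of_condExp_eq (hm : m ≤ mΩ) [SigmaFinite (μ.trim hm)]
    {U V : Ω → E} (hRq : μ[R | m] =ᵐ[μ] q) (hR : Integrable R μ)
    (hU : AEStronglyMeasurable[m] U μ) (hV : AEStronglyMeasurable[m] V μ) (hVi : Integrable V μ)
    (hi : Integrable (R • U + V) μ) :
    ∫ ω, (R ω • U ω + V ω) ∂μ = ∫ ω, (q ω • U ω + V ω) ∂μ := by
  have hRU : Integrable (R • U) μ := by simpa using hi.sub hVi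
  rw [← integral_condExp hm]
  refine integral_congr_ae ?_
  filter_upwards [condExp_add hRU hVi m, condExp_smul_of_aestronglyMeasurable_right hR hRU hU,
    condExp_of_aestronglyMeasurable' hm hV hVi, hRq] with ω hadd hsmul hVω hRω
  rw [Pi.add_apply, hsmul, hVω, Pi.smul_apply', hRω] at hadd
  exact hadd

theorem integral_one_sub_smul_eq_of_condExp_eq [IsFiniteMeasure μ] (hm : m ≤ mΩ) {s : Ω → E}
    (hRq : μ[R | m] =ᵐ[μ] q) (hR : AEStronglyMeasurable R μ) {C : ℝ}
    (hRb : ∀ᵐ ω ∂μ, ‖R ω‖ ≤ C) (hs : AEStronglyMeasurable[m] s μ) (hsi : Integrable s μ) :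
    ∫ ω, (1 - R ω) • s ω ∂μ = ∫ ω, (1 - q ω) • s ω ∂μ := by
  have key := integral_smul_add_eq_of_condExp_eq (U := fun ω => -s ω) hm hRq
    (.of_bound hR C hRb) hs.neg hs hsi ((hsi.neg.bdd_smul C hR hRb).add hsi)
  simpa only [sub_smul, one_smul, smul_neg, neg_add_eq_sub] using key

end ConditionalReplacement

theorem weights_eq_of_densityRatio {p pl w : ℝ} (hp : p ≠ 0) (hpl : pl ≠ 0) (hpl' : 1 - pl ≠ 0)
    (hw : w = pl / (1 - pl) * ((1 - p) / p)) :
    p * (w / pl) = (1 - p) / (1 - pl) ∧ w / (pl + (1 - pl) * w) = (1 - p) / (1 - pl) := by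
  subst hw
  have hden : pl + (1 - pl) * (pl / (1 - pl) * ((1 - p) / p)) = pl / p := by
    field_simp; ring
  rw [hden]
  constructor <;> field_simp

section InfluenceFunction

variable {Ω E : Type*} [NormedAddCommGroup E] [NormedSpace ℝ E]

noncomputable def influenceFn (pl : ℝ) (R w : Ω → ℝ) (s mt m0 : Ω → E) : Ω → E :=
  fun ω => (R ω / pl) • (w ω • (s ω - mt ω)) + (w ω / (pl + (1 - pl) * w ω)) • (mt ω - m0 ω)
    + ((1 - R ω) / (1 - pl)) • m0 ω

variable [CompleteSpace E] {m mΩ : MeasurableSpace Ω} {μ : Measure Ω} [IsFiniteMeasure μ]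
  {R q w : Ω → ℝ} {pl C : ℝ} {s mt m0 : Ω → E}

theorem integral_influenceFn (hm : m ≤ mΩ) (hRq : μ[R | m] =ᵐ[μ] q)
    (hR : AEStronglyMeasurable R μ) (hRb : ∀ᵐ ω ∂μ, ‖R ω‖ ≤ C)
    (hq : ∀ ω, q ω ∈ Set.Ioo (0 : ℝ) 1) (hqm : Measurable[m] q) (hpl : pl ∈ Set.Ioo (0 : ℝ) 1)
    (hw : ∀ ω, w ω = pl / (1 - pl) * ((1 - q ω) / q ω))
    (hs : AEStronglyMeasurable[m] s μ) (hmt : AEStronglyMeasurable[m] mt μ)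
    (hm0 : AEStronglyMeasurable[m] m0 μ) (hsi : Integrable s μ) (hmti : Integrable mt μ)
    (hm0i : Integrable m0 μ) (hφ : Integrable (influenceFn pl R w s mt m0) μ) :
    ∫ ω, influenceFn pl R w s mt m0 ω ∂μ = (1 - pl)⁻¹ • ∫ ω, (1 - R ω) • s ω ∂μ := by
  obtain ⟨hpl0, hpl1⟩ := hpl
  have hweights ω := weights_eq_of_densityRatio (hq ω).1.ne' hpl0.ne' (sub_ne_zero.2 hpl1.ne') (hw ω)
  set U : Ω → E := fun ω => (w ω / pl) • (s ω - mt ω) - (1 - pl)⁻¹ • m0 ω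
  set V : Ω → E := fun ω => (1 - pl)⁻¹ • ((1 - q ω) • (mt ω - m0 ω) + m0 ω)
  have hφUV : influenceFn pl R w s mt m0 = R • U + V := funext fun ω => by
    simp only [influenceFn, Pi.add_apply, Pi.smul_apply', U, V, (hweights ω).2]
    module
  have hwm : Measurable[m] w := by
    rw [funext hw]; fun_prop
  have hUm : AEStronglyMeasurable[m] U μ :=
    ((hwm.div_const pl).aestronglyMeasurable.smul (hs.sub hmt)).sub (hm0.const_smul (1 - pl)⁻¹)
  have hVm : AEStronglyMeasurable[m] V μ :=
    (((hqm.const_sub 1).aestronglyMeasurable.smul (hmt.sub hm0)).add hm0).const_smul (1 - pl)⁻¹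
  have hVi : Integrable V μ := by
    have hb ω : ‖1 - q ω‖ ≤ 1 := by
      obtain ⟨h0, h1⟩ := hq ω
      rw [Real.norm_eq_abs, abs_le]; constructor <;> linarith
    exact (((hmti.sub hm0i).bdd_smul 1 ((hqm.mono hm le_rfl).const_sub 1).aestronglyMeasurable
      (ae_of_all _ hb)).add hm0i).smul (1 - pl)⁻¹
  calc ∫ ω, influenceFn pl R w s mt m0 ω ∂μ = ∫ ω, (R ω • U ω + V ω) ∂μ := by rw [hφUV]; rfl
    _ = ∫ ω, (q ω • U ω + V ω) ∂μ :=
      integral_smul_add_eq_of_condExp_eq hm hRq (.of_bound hR C hRb) hUm hVm hVi (hφUV ▸ hφ)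
    _ = (1 - pl)⁻¹ • ∫ ω, (1 - q ω) • s ω ∂μ := by
      rw [← integral_smul]
      refine integral_congr_ae (ae_of_all _ fun ω => ?_)
      linear_combination (norm := module) (hweights ω).1 • (s ω - mt ω)
    _ = (1 - pl)⁻¹ • ∫ ω, (1 - R ω) • s ω ∂μ := by
      rw [integral_one_sub_smul_eq_of_condExp_eq hm hRq hR hRb hs hsi]

end InfluenceFunction

theorem stmt_8_general {Ω : Type*} [MeasurableSpace Ω] (μ : Measure Ω) [IsProbabilityMeasure μ]
    {d : ℕ} (R Y X Yh : Ω → ℝ)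
    (hR : Measurable R) (hY : Measurable Y) (hX : Measurable X) (hYh : Measurable Yh)
    (hRbin : ∀ ω, R ω = 0 ∨ R ω = 1)
    (p0 : ℝ → ℝ) (hp0 : Measurable p0) (hp0mem : ∀ x, p0 x ∈ Set.Ioo (0:ℝ) 1)
    (pl : ℝ) (hplmem : pl ∈ Set.Ioo (0:ℝ) 1)
    (w0 : ℝ → ℝ) (hw0 : ∀ x, w0 x = (pl / (1 - pl)) * ((1 - p0 x) / p0 x))
    (hMAR : μ[R | MeasurableSpace.comap (fun ω => (Y ω, Yh ω, X ω)) inferInstance]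
      =ᵐ[μ] fun ω => p0 (X ω))
    (s0 : ℝ → ℝ → Fin d → ℝ) (hs0 : Measurable (Function.uncurry s0))
    (s mt m0 : Ω → Fin d → ℝ) (hs : s = fun ω => s0 (Y ω) (X ω))
    (hsInt : Integrable s μ)
    (hmt : mt =ᵐ[μ] μ[s | MeasurableSpace.comap (fun ω => (X ω, Yh ω)) inferInstance])
    (hm0 : m0 =ᵐ[μ] μ[s | MeasurableSpace.comap X inferInstance])
    (hmtInt : Integrable mt μ) (hm0Int : Integrable m0 μ)
    (φ : Ω → Fin d → ℝ)
    (hφ : φ = fun ω => (R ω / pl) • (w0 (X ω) • (s ω - mt ω))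
        + (w0 (X ω) / (pl + (1 - pl) * w0 (X ω))) • (mt ω - m0 ω)
        + ((1 - R ω) / (1 - pl)) • m0 ω)
    (hφInt : Integrable φ μ) :
    ∫ ω, φ ω ∂μ = (1 - pl)⁻¹ • ∫ ω, (1 - R ω) • s ω ∂μ := by
  subst hφ
  have hm := (hY.prodMk (hYh.prodMk hX)).comap_le
  set m := MeasurableSpace.comap (fun ω => (Y ω, Yh ω, X ω)) inferInstance
  have hYYhX : Measurable[m] fun ω => (Y ω, Yh ω, X ω) := comap_measurable _
  have hXm : Measurable[m] X := measurable_snd.snd.comp hYYhX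
  have hYhm : Measurable[m] Yh := measurable_snd.fst.comp hYYhX
  have hsm : AEStronglyMeasurable[m] s μ := by
    rw [hs]
    exact (hs0.comp ((measurable_fst.comp hYYhX).prodMk hXm)).aestronglyMeasurable
  have hRb : ∀ ω, ‖R ω‖ ≤ 1 := fun ω => by rcases hRbin ω with h | h <;> simp [h]
  exact integral_influenceFn hm hMAR hR.aestronglyMeasurable (ae_of_all _ hRb)
    (fun ω => hp0mem (X ω)) (hp0.comp hXm) hplmem (fun ω => hw0 (X ω)) hsm
    ((stronglyMeasurable_condExp.mono (hXm.prodMk hYhm).comap_le).aestronglyMeasurable.congr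
      hmt.symm)
    ((stronglyMeasurable_condExp.mono hXm.comap_le).aestronglyMeasurable.congr hm0.symm)
    hsInt hmtInt hm0Int hφInt

theorem stmt_8 {Ω : Type*} [MeasurableSpace Ω] (μ : Measure Ω) [IsProbabilityMeasure μ]
    {d : ℕ} (R Y X Yh : Ω → ℝ)
    (hR : Measurable R) (hY : Measurable Y) (hX : Measurable X) (hYh : Measurable Yh)
    (hRbin : ∀ ω, R ω = 0 ∨ R ω = 1)
    (p0 : ℝ → ℝ) (hp0 : Measurable p0) (hp0mem : ∀ x, p0 x ∈ Set.Ioo (0:ℝ) 1)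
    (pl : ℝ) (hpl : pl = (μ {ω | R ω = 1}).toReal) (hplmem : pl ∈ Set.Ioo (0:ℝ) 1)
    (w0 : ℝ → ℝ) (hw0 : ∀ x, w0 x = (pl / (1 - pl)) * ((1 - p0 x) / p0 x))
    (hMAR : μ[R | MeasurableSpace.comap (fun ω => (Y ω, Yh ω, X ω)) inferInstance]
      =ᵐ[μ] fun ω => p0 (X ω))
    (s0 : ℝ → ℝ → Fin d → ℝ) (hs0 : Measurable (Function.uncurry s0))
    (s mt m0 : Ω → Fin d → ℝ) (hs : s = fun ω => s0 (Y ω) (X ω))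
    (hsInt : Integrable s μ)
    (hmt : mt =ᵐ[μ] μ[s | MeasurableSpace.comap (fun ω => (X ω, Yh ω)) inferInstance])
    (hm0 : m0 =ᵐ[μ] μ[s | MeasurableSpace.comap X inferInstance])
    (hmtInt : Integrable mt μ) (hm0Int : Integrable m0 μ)
    (hws : Integrable (fun ω => w0 (X ω) • s ω) μ)
    (hwmt : Integrable (fun ω => w0 (X ω) • mt ω) μ)
    (φ : Ω → Fin d → ℝ)
    (hφ : φ = fun ω => (R ω / pl) • (w0 (X ω) • (s ω - mt ω))
        + (w0 (X ω) / (pl + (1 - pl) * w0 (X ω))) • (mt ω - m0 ω)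
        + ((1 - R ω) / (1 - pl)) • m0 ω)
    (hφInt : Integrable φ μ) :
    ∫ ω, φ ω ∂μ = (1 - pl)⁻¹ • ∫ ω, (1 - R ω) • s ω ∂μ :=
  stmt_8_general μ R Y X Yh hR hY hX hYh hRbin p0 hp0 hp0mem pl hplmem w0 hw0 hMAR s0 hs0 s mt m0 hs
    hsInt hmt hm0 hmtInt hm0Int φ hφ hφInt
end

section
/- Under the setup where P(R=1|Y,Ŷ,X) = π₀(X), π = P(R=1), and w₀(x) = (π/(1−π))(1−π₀(x))/π₀(x): for ANY bounded measurable functions m̃*(x,ŷ) and m*(x), the function φ = (R/π)·w₀(X)·(s(Y,X) − m̃*(X,Ŷ)) + (w₀(X)/(π + (1−π)w₀(X)))·(m̃*(X,Ŷ) − m*(X)) + ((1−R)/(1−π))·m*(X) satisfies E[φ] = E_q[s(Y,X)]. That is, with the true density ratio w₀, the estimating function remains unbiased under arbitrary misspecification of the conditional-mean models. -/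
open MeasureTheory

open MeasureTheory in
private lemma key_aux_stmt9 {Ω : Type*} {m m0 : MeasurableSpace Ω} (hm : m ≤ m0)
    (μ : @Measure Ω m0) [IsFiniteMeasure μ] (Rf q f : Ω → ℝ)
    (hMAR : μ[Rf|m] =ᵐ[μ] q) (hf : StronglyMeasurable[m] f)
    (hfR : Integrable (fun ω => f ω * Rf ω) μ) (hRint : Integrable Rf μ) :
    ∫ ω, f ω * Rf ω ∂μ = ∫ ω, f ω * q ω ∂μ := by
  have h0 : Integrable (f * Rf) μ := hfR
  have h1 : μ[f * Rf|m] =ᵐ[μ] f * μ[Rf|m] := condExp_mul_of_stronglyMeasurable_left hf h0 hRint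
  have h2 : f * μ[Rf|m] =ᵐ[μ] fun ω => f ω * q ω := by
    filter_upwards [hMAR] with ω hω
    simp only [Pi.mul_apply, hω]
  calc ∫ ω, f ω * Rf ω ∂μ = ∫ ω, (f * Rf) ω ∂μ := rfl
    _ = ∫ ω, (μ[f * Rf|m]) ω ∂μ := (integral_condExp hm).symm
    _ = ∫ ω, f ω * q ω ∂μ := integral_congr_ae (h1.trans h2)

private lemma sm_comap_stmt9 {Ω β : Type*} [MeasurableSpace β] (T : Ω → β) {g : β → ℝ}
    (hg : Measurable g) :
    StronglyMeasurable[MeasurableSpace.comap T inferInstance] (fun ω => g (T ω)) :=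
  (hg.comp (Measurable.of_comap_le le_rfl)).stronglyMeasurable


theorem stmt_9 {Ω : Type*} [MeasurableSpace Ω] (μ : Measure Ω) [IsProbabilityMeasure μ]
    {d : ℕ} (R Y X Yh : Ω → ℝ)
    (hR : Measurable R) (hY : Measurable Y) (hX : Measurable X) (hYh : Measurable Yh)
    (hRbin : ∀ ω, R ω = 0 ∨ R ω = 1)
    (p0 : ℝ → ℝ) (hp0 : Measurable p0) (hp0mem : ∀ x, p0 x ∈ Set.Ioo (0:ℝ) 1)
    (pl : ℝ) (hpl : pl = (μ {ω | R ω = 1}).toReal) (hplmem : pl ∈ Set.Ioo (0:ℝ) 1)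
    (w0 : ℝ → ℝ) (hw0 : ∀ x, w0 x = (pl / (1 - pl)) * ((1 - p0 x) / p0 x))
    (hMAR : μ[R | MeasurableSpace.comap (fun ω => (Y ω, Yh ω, X ω)) inferInstance]
      =ᵐ[μ] fun ω => p0 (X ω))
    (s0 : ℝ → ℝ → Fin d → ℝ) (hs0 : Measurable (Function.uncurry s0))
    (s : Ω → Fin d → ℝ) (hs : s = fun ω => s0 (Y ω) (X ω))
    (hsInt : Integrable s μ)
    (hws : Integrable (fun ω => w0 (X ω) • s ω) μ)
    (hw0Int : Integrable (fun ω => w0 (X ω)) μ)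
    (mts : ℝ → ℝ → Fin d → ℝ) (hmts : Measurable (Function.uncurry mts))
    (ms : ℝ → Fin d → ℝ) (hms : Measurable ms)
    (Cb : ℝ) (hmts_bd : ∀ x yh, ‖mts x yh‖ ≤ Cb) (hms_bd : ∀ x, ‖ms x‖ ≤ Cb)
    (φ : Ω → Fin d → ℝ)
    (hφ : φ = fun ω => (R ω / pl) • (w0 (X ω) • (s ω - mts (X ω) (Yh ω)))
        + (w0 (X ω) / (pl + (1 - pl) * w0 (X ω))) • (mts (X ω) (Yh ω) - ms (X ω))
        + ((1 - R ω) / (1 - pl)) • ms (X ω))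
    (hφInt : Integrable φ μ) :
    ∫ ω, φ ω ∂μ = (1 - pl)⁻¹ • ∫ ω, (1 - R ω) • s ω ∂μ := by
  obtain ⟨hpl0, hpl1⟩ := hplmem
  have h1pl : (0:ℝ) < 1 - pl := by linarith
  have hplne : pl ≠ 0 := ne_of_gt hpl0
  have h1plne : (1:ℝ) - pl ≠ 0 := ne_of_gt h1pl
  subst hφ
  subst hs
  have hT : Measurable (fun ω => (Y ω, Yh ω, X ω)) := hY.prodMk (hYh.prodMk hX)
  have hRabs : ∀ ω, |R ω| ≤ 1 := by
    intro ω; rcases hRbin ω with h | h <;> simp [h]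
  have hRint : Integrable R μ := by
    refine Integrable.mono' (integrable_const 1) hR.aestronglyMeasurable ?_
    exact Filter.Eventually.of_forall fun ω => by simpa using hRabs ω
  -- key identity
  have key : ∀ f : Ω → ℝ,
      StronglyMeasurable[MeasurableSpace.comap (fun ω => (Y ω, Yh ω, X ω)) inferInstance] f →
      Integrable (fun ω => f ω * R ω) μ →
      ∫ ω, f ω * R ω ∂μ = ∫ ω, f ω * p0 (X ω) ∂μ := fun f hf hfR =>
    key_aux_stmt9 hT.comap_le μ R (fun ω => p0 (X ω)) f hMAR hf hfR hRint
  have hw0f : w0 = fun x => (pl / (1 - pl)) * ((1 - p0 x) / p0 x) := funext hw0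
  have hw0m : Measurable w0 := by
    rw [hw0f]; exact measurable_const.mul ((measurable_const.sub hp0).div hp0)
  have hp0b : ∀ x, |p0 x| ≤ 1 := fun x => by
    have h := hp0mem x
    rw [abs_of_pos h.1]; linarith [h.2]
  have hCb0 : (0:ℝ) ≤ Cb := le_trans (norm_nonneg _) (hms_bd 0)
  have hcoef : ∀ x, w0 x / (pl + (1 - pl) * w0 x) = (1 - p0 x) / (1 - pl) := by
    intro x
    obtain ⟨h0, h1⟩ := hp0mem x
    have h0ne : p0 x ≠ 0 := ne_of_gt h0
    rw [hw0 x]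
    rw [div_eq_div_iff]
    · field_simp
      ring
    · have : pl + (1 - pl) * (pl / (1 - pl) * ((1 - p0 x) / p0 x)) = pl / p0 x := by
        field_simp
        ring
      rw [this]
      exact div_ne_zero hplne h0ne
    · exact h1plne
  funext i
  -- measurability of components
  have hsm : Measurable (fun ω => s0 (Y ω) (X ω)) := hs0.comp (hY.prodMk hX)
  have hsim : Measurable (fun ω => s0 (Y ω) (X ω) i) := (measurable_pi_apply i).comp hsm
  have hmtsim : Measurable (fun ω => mts (X ω) (Yh ω) i) :=
    ((measurable_pi_apply i).comp hmts).comp (hX.prodMk hYh)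
  have hmsim : Measurable (fun ω => ms (X ω) i) := ((measurable_pi_apply i).comp hms).comp hX
  have hmtsi_bd : ∀ ω, |mts (X ω) (Yh ω) i| ≤ Cb := fun ω =>
    (norm_le_pi_norm (mts (X ω) (Yh ω)) i).trans (hmts_bd _ _)
  have hmsi_bd : ∀ ω, |ms (X ω) i| ≤ Cb := fun ω =>
    (norm_le_pi_norm (ms (X ω)) i).trans (hms_bd _)
  -- integrabilities
  have hsInt_i : Integrable (fun ω => s0 (Y ω) (X ω) i) μ :=
    (ContinuousLinearMap.proj (R := ℝ) (φ := fun _ : Fin d => ℝ) i).integrable_comp hsInt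
  have hwsi : Integrable (fun ω => w0 (X ω) * s0 (Y ω) (X ω) i) μ :=
    (ContinuousLinearMap.proj (R := ℝ) (φ := fun _ : Fin d => ℝ) i).integrable_comp hws
  have hwmtsi : Integrable (fun ω => w0 (X ω) * mts (X ω) (Yh ω) i) μ := by
    refine Integrable.mono' ((hw0Int.norm).mul_const Cb)
      (((hw0m.comp hX).mul hmtsim).aestronglyMeasurable) ?_
    refine Filter.Eventually.of_forall fun ω => ?_
    rw [Real.norm_eq_abs, abs_mul]
    exact mul_le_mul_of_nonneg_left (hmtsi_bd ω) (abs_nonneg _)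
  set a : Ω → ℝ := fun ω => w0 (X ω) * (s0 (Y ω) (X ω) i - mts (X ω) (Yh ω) i) with ha
  have ha_int : Integrable a μ := by
    have : a = fun ω => w0 (X ω) * s0 (Y ω) (X ω) i - w0 (X ω) * mts (X ω) (Yh ω) i := by
      funext ω; simp [ha]; ring
    rw [this]; exact hwsi.sub hwmtsi
  have hc_int : Integrable (fun ω => ms (X ω) i) μ := by
    refine Integrable.mono' (integrable_const Cb) hmsim.aestronglyMeasurable ?_
    exact Filter.Eventually.of_forall fun ω => by simpa using hmsi_bd ω
  set u : Ω → ℝ := fun ω => pl⁻¹ * a ω - (1 - pl)⁻¹ * ms (X ω) i with hu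
  set v : Ω → ℝ := fun ω =>
    ((1 - p0 (X ω)) / (1 - pl)) * (mts (X ω) (Yh ω) i - ms (X ω) i)
      + (1 - pl)⁻¹ * ms (X ω) i with hv
  have hu_int : Integrable u μ := (ha_int.const_mul _).sub (hc_int.const_mul _)
  have ha_meas : Measurable a := (hw0m.comp hX).mul (hsim.sub hmtsim)
  have hu_meas : Measurable u := (ha_meas.const_mul _).sub (hmsim.const_mul _)
  have hv_meas : Measurable v :=
    ((((measurable_const.sub (hp0.comp hX)).div_const _).mul (hmtsim.sub hmsim))).add
      (hmsim.const_mul _)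
  have hv_int : Integrable v μ := by
    refine Integrable.mono'
      (integrable_const ((1 - pl)⁻¹ * (Cb + Cb) + (1 - pl)⁻¹ * Cb))
      hv_meas.aestronglyMeasurable ?_
    refine Filter.Eventually.of_forall fun ω => ?_
    rw [Real.norm_eq_abs, hv]
    have habs1 : |(1 - p0 (X ω)) / (1 - pl)| ≤ (1 - pl)⁻¹ := by
      rw [abs_div, abs_of_pos h1pl]
      have h := hp0mem (X ω)
      have : |1 - p0 (X ω)| ≤ 1 := by rw [abs_of_pos (by linarith [h.2])]; linarith [h.1]
      calc |1 - p0 (X ω)| / (1 - pl) ≤ 1 / (1 - pl) := by gcongr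
        _ = (1 - pl)⁻¹ := one_div _
    have habs2 : |mts (X ω) (Yh ω) i - ms (X ω) i| ≤ Cb + Cb :=
      (abs_sub _ _).trans (add_le_add (hmtsi_bd ω) (hmsi_bd ω))
    calc |((1 - p0 (X ω)) / (1 - pl)) * (mts (X ω) (Yh ω) i - ms (X ω) i)
            + (1 - pl)⁻¹ * ms (X ω) i|
        ≤ |((1 - p0 (X ω)) / (1 - pl)) * (mts (X ω) (Yh ω) i - ms (X ω) i)|
            + |(1 - pl)⁻¹ * ms (X ω) i| := abs_add_le _ _
      _ ≤ (1 - pl)⁻¹ * (Cb + Cb) + (1 - pl)⁻¹ * Cb := by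
          refine add_le_add ?_ ?_
          · rw [abs_mul]
            exact mul_le_mul habs1 habs2 (abs_nonneg _) (by positivity)
          · rw [abs_mul, abs_of_pos (by positivity : (0:ℝ) < (1 - pl)⁻¹)]
            exact mul_le_mul_of_nonneg_left (hmsi_bd ω) (by positivity)
  have huR_int : Integrable (fun ω => u ω * R ω) μ := by
    refine Integrable.mono' hu_int.norm ((hu_meas.mul hR).aestronglyMeasurable) ?_
    refine Filter.Eventually.of_forall fun ω => ?_
    rw [Real.norm_eq_abs, Real.norm_eq_abs, abs_mul]
    calc |u ω| * |R ω| ≤ |u ω| * 1 := mul_le_mul_of_nonneg_left (hRabs ω) (abs_nonneg _)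
      _ = |u ω| := mul_one _
  have hup0_int : Integrable (fun ω => u ω * p0 (X ω)) μ := by
    refine Integrable.mono' hu_int.norm ((hu_meas.mul (hp0.comp hX)).aestronglyMeasurable) ?_
    refine Filter.Eventually.of_forall fun ω => ?_
    rw [Real.norm_eq_abs, Real.norm_eq_abs, abs_mul]
    calc |u ω| * |p0 (X ω)| ≤ |u ω| * 1 := mul_le_mul_of_nonneg_left (hp0b _) (abs_nonneg _)
      _ = |u ω| := mul_one _
  have hsiR_int : Integrable (fun ω => s0 (Y ω) (X ω) i * R ω) μ := by
    refine Integrable.mono' hsInt_i.norm ((hsim.mul hR).aestronglyMeasurable) ?_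
    refine Filter.Eventually.of_forall fun ω => ?_
    rw [Real.norm_eq_abs, Real.norm_eq_abs, abs_mul]
    calc |s0 (Y ω) (X ω) i| * |R ω| ≤ |s0 (Y ω) (X ω) i| * 1 :=
          mul_le_mul_of_nonneg_left (hRabs ω) (abs_nonneg _)
      _ = _ := mul_one _
  have hsip0_int : Integrable (fun ω => s0 (Y ω) (X ω) i * p0 (X ω)) μ := by
    refine Integrable.mono' hsInt_i.norm ((hsim.mul (hp0.comp hX)).aestronglyMeasurable) ?_
    refine Filter.Eventually.of_forall fun ω => ?_
    rw [Real.norm_eq_abs, Real.norm_eq_abs, abs_mul]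
    calc |s0 (Y ω) (X ω) i| * |p0 (X ω)| ≤ |s0 (Y ω) (X ω) i| * 1 :=
          mul_le_mul_of_nonneg_left (hp0b _) (abs_nonneg _)
      _ = _ := mul_one _
  -- strong measurability wrt m
  have hum : StronglyMeasurable[MeasurableSpace.comap
      (fun ω => (Y ω, Yh ω, X ω)) inferInstance] u := by
    have hg : Measurable (fun p : ℝ × ℝ × ℝ =>
        pl⁻¹ * (w0 p.2.2 * (s0 p.1 p.2.2 i - mts p.2.2 p.2.1 i))
          - (1 - pl)⁻¹ * ms p.2.2 i) := by
      have h1 : Measurable (fun p : ℝ × ℝ × ℝ => w0 p.2.2) :=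
        hw0m.comp (measurable_snd.comp measurable_snd)
      have h2 : Measurable (fun p : ℝ × ℝ × ℝ => s0 p.1 p.2.2 i) :=
        ((measurable_pi_apply i).comp hs0).comp
          (measurable_fst.prodMk (measurable_snd.comp measurable_snd))
      have h3 : Measurable (fun p : ℝ × ℝ × ℝ => mts p.2.2 p.2.1 i) :=
        ((measurable_pi_apply i).comp hmts).comp
          ((measurable_snd.comp measurable_snd).prodMk (measurable_fst.comp measurable_snd))
      have h4 : Measurable (fun p : ℝ × ℝ × ℝ => ms p.2.2 i) :=
        ((measurable_pi_apply i).comp hms).comp (measurable_snd.comp measurable_snd)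
      exact ((h1.mul (h2.sub h3)).const_mul _).sub (h4.const_mul _)
    exact sm_comap_stmt9 (fun ω => (Y ω, Yh ω, X ω)) hg
  have hsm' : StronglyMeasurable[MeasurableSpace.comap
      (fun ω => (Y ω, Yh ω, X ω)) inferInstance] (fun ω => s0 (Y ω) (X ω) i) := by
    have hg : Measurable (fun p : ℝ × ℝ × ℝ => s0 p.1 p.2.2 i) :=
      ((measurable_pi_apply i).comp hs0).comp
        (measurable_fst.prodMk (measurable_snd.comp measurable_snd))
    exact sm_comap_stmt9 (fun ω => (Y ω, Yh ω, X ω)) hg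
  -- pointwise decomposition
  have hdecomp : ∀ ω, ((R ω / pl) • (w0 (X ω) • (s0 (Y ω) (X ω) - mts (X ω) (Yh ω)))
      + (w0 (X ω) / (pl + (1 - pl) * w0 (X ω))) • (mts (X ω) (Yh ω) - ms (X ω))
      + ((1 - R ω) / (1 - pl)) • ms (X ω)) i = u ω * R ω + v ω := by
    intro ω
    simp only [Pi.add_apply, Pi.smul_apply, Pi.sub_apply, smul_eq_mul, hu, hv, ha,
      hcoef (X ω)]
    field_simp
    ring
  have hfinal : ∀ ω, u ω * p0 (X ω) + v ω
      = (1 - pl)⁻¹ * ((1 - p0 (X ω)) * s0 (Y ω) (X ω) i) := by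
    intro ω
    obtain ⟨h0, h1⟩ := hp0mem (X ω)
    have h0ne : p0 (X ω) ≠ 0 := ne_of_gt h0
    simp only [hu, hv, ha, hw0 (X ω)]
    field_simp
    ring
  -- component extraction
  have hLcomp : (∫ ω, ((R ω / pl) • (w0 (X ω) • (s0 (Y ω) (X ω) - mts (X ω) (Yh ω)))
      + (w0 (X ω) / (pl + (1 - pl) * w0 (X ω))) • (mts (X ω) (Yh ω) - ms (X ω))
      + ((1 - R ω) / (1 - pl)) • ms (X ω)) ∂μ) i
      = ∫ ω, ((R ω / pl) • (w0 (X ω) • (s0 (Y ω) (X ω) - mts (X ω) (Yh ω)))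
      + (w0 (X ω) / (pl + (1 - pl) * w0 (X ω))) • (mts (X ω) (Yh ω) - ms (X ω))
      + ((1 - R ω) / (1 - pl)) • ms (X ω)) i ∂μ :=
    (ContinuousLinearMap.integral_comp_comm
      (ContinuousLinearMap.proj (R := ℝ) (φ := fun _ : Fin d => ℝ) i) hφInt).symm
  have h1Rs : Integrable (fun ω => (1 - R ω) • s0 (Y ω) (X ω)) μ := by
    refine Integrable.mono' hsInt.norm ((measurable_const.sub hR).smul hsm).aestronglyMeasurable ?_
    refine Filter.Eventually.of_forall fun ω => ?_
    rw [norm_smul]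
    have hb : ‖(1:ℝ) - R ω‖ ≤ 1 := by rcases hRbin ω with h | h <;> simp [h]
    calc ‖(1:ℝ) - R ω‖ * ‖s0 (Y ω) (X ω)‖ ≤ 1 * ‖s0 (Y ω) (X ω)‖ :=
          mul_le_mul_of_nonneg_right hb (norm_nonneg _)
      _ = ‖s0 (Y ω) (X ω)‖ := one_mul _
  have hRcomp : (∫ ω, (1 - R ω) • s0 (Y ω) (X ω) ∂μ) i
      = ∫ ω, (1 - R ω) * s0 (Y ω) (X ω) i ∂μ :=
    (ContinuousLinearMap.integral_comp_comm
      (ContinuousLinearMap.proj (R := ℝ) (φ := fun _ : Fin d => ℝ) i) h1Rs).symm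
  -- put it together
  have hLHS : (∫ ω, ((R ω / pl) • (w0 (X ω) • (s0 (Y ω) (X ω) - mts (X ω) (Yh ω)))
      + (w0 (X ω) / (pl + (1 - pl) * w0 (X ω))) • (mts (X ω) (Yh ω) - ms (X ω))
      + ((1 - R ω) / (1 - pl)) • ms (X ω)) ∂μ) i
      = (1 - pl)⁻¹ * ∫ ω, (1 - p0 (X ω)) * s0 (Y ω) (X ω) i ∂μ := by
    rw [hLcomp]
    calc ∫ ω, ((R ω / pl) • (w0 (X ω) • (s0 (Y ω) (X ω) - mts (X ω) (Yh ω)))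
          + (w0 (X ω) / (pl + (1 - pl) * w0 (X ω))) • (mts (X ω) (Yh ω) - ms (X ω))
          + ((1 - R ω) / (1 - pl)) • ms (X ω)) i ∂μ
        = ∫ ω, (u ω * R ω + v ω) ∂μ := integral_congr_ae (Filter.Eventually.of_forall hdecomp)
      _ = (∫ ω, u ω * R ω ∂μ) + ∫ ω, v ω ∂μ := integral_add huR_int hv_int
      _ = (∫ ω, u ω * p0 (X ω) ∂μ) + ∫ ω, v ω ∂μ := by rw [key u hum huR_int]
      _ = ∫ ω, (u ω * p0 (X ω) + v ω) ∂μ := (integral_add hup0_int hv_int).symm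
      _ = ∫ ω, (1 - pl)⁻¹ * ((1 - p0 (X ω)) * s0 (Y ω) (X ω) i) ∂μ :=
          integral_congr_ae (Filter.Eventually.of_forall hfinal)
      _ = (1 - pl)⁻¹ * ∫ ω, (1 - p0 (X ω)) * s0 (Y ω) (X ω) i ∂μ := integral_const_mul _ _
  have hRHS : ∫ ω, (1 - R ω) * s0 (Y ω) (X ω) i ∂μ
      = ∫ ω, (1 - p0 (X ω)) * s0 (Y ω) (X ω) i ∂μ := by
    calc ∫ ω, (1 - R ω) * s0 (Y ω) (X ω) i ∂μ
        = ∫ ω, (s0 (Y ω) (X ω) i - s0 (Y ω) (X ω) i * R ω) ∂μ :=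
          integral_congr_ae (Filter.Eventually.of_forall fun ω => by ring)
      _ = (∫ ω, s0 (Y ω) (X ω) i ∂μ) - ∫ ω, s0 (Y ω) (X ω) i * R ω ∂μ :=
          integral_sub hsInt_i hsiR_int
      _ = (∫ ω, s0 (Y ω) (X ω) i ∂μ) - ∫ ω, s0 (Y ω) (X ω) i * p0 (X ω) ∂μ := by
          rw [key _ hsm' hsiR_int]
      _ = ∫ ω, (s0 (Y ω) (X ω) i - s0 (Y ω) (X ω) i * p0 (X ω)) ∂μ :=
          (integral_sub hsInt_i hsip0_int).symm
      _ = ∫ ω, (1 - p0 (X ω)) * s0 (Y ω) (X ω) i ∂μ :=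
          integral_congr_ae (Filter.Eventually.of_forall fun ω => by ring)
  rw [Pi.smul_apply, smul_eq_mul, hRcomp, hRHS]
  exact hLHS
end

section
/- Under the setup where P(R=1|Y,Ŷ,X) = π₀(X), π = P(R=1): for ANY measurable positive function w*(x) (not necessarily equal to the true density ratio), if the conditional-mean models are correctly specified, i.e. m̃*(x,ŷ) = E[s(Y,X)|X=x,Ŷ=ŷ] and m*(x) = E[s(Y,X)|X=x], then φ = (R/π)·w*(X)·(s(Y,X) − m̃*(X,Ŷ)) + (w*(X)/(π + (1−π)w*(X)))·(m̃*(X,Ŷ) − m*(X)) + ((1−R)/(1−π))·m*(X) satisfies E[φ] = E_q[s(Y,X)]. -/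
/-!
Split `φ` into its three terms. Since `E[R | Y, Ŷ, X] = π₀(X)`, the factor `R` (resp. `1 - R`)
may be replaced by `π₀(X)` (resp. `1 - π₀(X)`) against any `σ(Y, Ŷ, X)`-measurable integrand.
The first term thus becomes `π⁻¹ E[π₀(X) w*(X) (s - m̃*)]`, which vanishes because
`m̃* = E[s | X, Ŷ]`. The second vanishes because `E[m̃* - m* | X] = 0` by the tower property.
In the third, `E[(1 - R) (s - m*)] = E[(1 - π₀(X)) (s - m*)] = 0` because `m* = E[s | X]`,
so `m*` may be replaced by `s`.
-/

open MeasureTheory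

section CondExp

variable {Ω E : Type*} [NormedAddCommGroup E] [NormedSpace ℝ E] [CompleteSpace E]
  {m m₁ mΩ : MeasurableSpace Ω} {μ : Measure[mΩ] Ω}

lemma condExp_ae_eq_of_ae_eq_condExp (hm : m ≤ m₁) (hm₁ : m₁ ≤ mΩ)
    [SigmaFinite (μ.trim hm₁)] {s a : Ω → E} (ha : a =ᵐ[μ] μ[s|m₁]) :
    μ[a|m] =ᵐ[μ] μ[s|m] :=
  (condExp_congr_ae ha).trans (condExp_condExp_of_le hm hm₁)

lemma condExp_sub_ae_eq_zero_of_condExp_ae_eq {a b : Ω → E} (hab : μ[a|m] =ᵐ[μ] μ[b|m])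
    (ha : Integrable a μ) (hb : Integrable b μ) :
    μ[fun ω => a ω - b ω|m] =ᵐ[μ] 0 := by
  filter_upwards [condExp_sub ha hb m, hab] with ω h_sub h_eq
  rw [Pi.zero_apply, ← sub_eq_zero.mpr h_eq]
  exact h_sub

lemma condExp_smul_ae_eq_zero_of_condExp_ae_eq_zero {f : Ω → ℝ} {g : Ω → E}
    (hf : AEStronglyMeasurable[m] f μ) (hg : Integrable g μ)
    (hfg : Integrable (fun ω => f ω • g ω) μ) (hg0 : μ[g|m] =ᵐ[μ] 0) :
    μ[fun ω => f ω • g ω|m] =ᵐ[μ] 0 := by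
  have h : μ[fun ω => f ω • g ω|m] =ᵐ[μ] f • μ[g|m] :=
    condExp_smul_of_aestronglyMeasurable_left hf hfg hg
  filter_upwards [h, hg0] with ω h h0
  simp [h, h0]

lemma integral_eq_zero_of_condExp_ae_eq_zero (hm : m ≤ mΩ) [SigmaFinite (μ.trim hm)]
    {g : Ω → E} (hg0 : μ[g|m] =ᵐ[μ] 0) : ∫ ω, g ω ∂μ = 0 := by
  rw [← integral_condExp hm, integral_congr_ae hg0, Pi.zero_def, integral_zero]

lemma condExp_smul_ae_eq_of_condExp_ae_eq {f c : Ω → ℝ} {u : Ω → E} (hfc : μ[f|m] =ᵐ[μ] c)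
    (hf : Integrable f μ) (hu : AEStronglyMeasurable[m] u μ)
    (hfu : Integrable (fun ω => f ω • u ω) μ) :
    μ[fun ω => f ω • u ω|m] =ᵐ[μ] fun ω => c ω • u ω :=
  (condExp_smul_of_aestronglyMeasurable_right hf hfu hu).trans
    (hfc.mono fun ω hω => by simp only [Pi.smul_apply', hω])

lemma integral_smul_eq_zero_of_condExp_ae_eq_zero [IsFiniteMeasure μ] (hm : m ≤ m₁)
    (hm₁ : m₁ ≤ mΩ) {f c : Ω → ℝ} {u : Ω → E} (hfc : μ[f|m₁] =ᵐ[μ] c)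
    (hc : AEStronglyMeasurable[m] c μ) (hf : Integrable f μ) (hu : AEStronglyMeasurable[m₁] u μ)
    (hu_int : Integrable u μ) (hfu : Integrable (fun ω => f ω • u ω) μ)
    (hu0 : μ[u|m] =ᵐ[μ] 0) :
    ∫ ω, f ω • u ω ∂μ = 0 := by
  have h := condExp_smul_ae_eq_of_condExp_ae_eq hfc hf hu hfu
  rw [← integral_condExp hm₁, integral_congr_ae h]
  exact integral_eq_zero_of_condExp_ae_eq_zero (hm.trans hm₁)
    (condExp_smul_ae_eq_zero_of_condExp_ae_eq_zero hc hu_int (integrable_condExp.congr h) hu0)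

lemma integral_smul_condExp_sub_condExp_eq_zero [IsFiniteMeasure μ] (hm : m ≤ m₁)
    (hm₁ : m₁ ≤ mΩ) {h : Ω → ℝ} (hh : AEStronglyMeasurable[m] h μ) {s a b : Ω → E}
    (ha : a =ᵐ[μ] μ[s|m₁]) (hb : b =ᵐ[μ] μ[s|m])
    (hhab : Integrable (fun ω => h ω • (a ω - b ω)) μ) :
    ∫ ω, h ω • (a ω - b ω) ∂μ = 0 := by
  have ha_int : Integrable a μ := integrable_condExp.congr ha.symm
  have hb_int : Integrable b μ := integrable_condExp.congr hb.symm
  exact integral_eq_zero_of_condExp_ae_eq_zero (hm.trans hm₁)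
    (condExp_smul_ae_eq_zero_of_condExp_ae_eq_zero hh (ha_int.sub hb_int) hhab
      (condExp_sub_ae_eq_zero_of_condExp_ae_eq
        ((condExp_ae_eq_of_ae_eq_condExp hm hm₁ ha).trans
          (condExp_ae_eq_of_ae_eq_condExp le_rfl (hm.trans hm₁) hb).symm) ha_int hb_int))

lemma integral_smul_smul_sub_condExp_eq_zero [IsFiniteMeasure μ] (hm : m ≤ m₁)
    (hm₁ : m₁ ≤ mΩ) {f c w : Ω → ℝ} (hfc : μ[f|m₁] =ᵐ[μ] c) (hc : AEStronglyMeasurable[m] c μ)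
    (hf : MemLp f ⊤ μ) (hw : AEStronglyMeasurable[m] w μ) {s s' : Ω → E}
    (hs : AEStronglyMeasurable[m₁] s μ) (hs_int : Integrable s μ) (hs' : s' =ᵐ[μ] μ[s|m])
    (hws : Integrable (fun ω => w ω • (s ω - s' ω)) μ) :
    ∫ ω, f ω • (w ω • (s ω - s' ω)) ∂μ = 0 := by
  have hs'_int : Integrable s' μ := integrable_condExp.congr hs'.symm
  have hs'_meas : AEStronglyMeasurable[m₁] s' μ :=
    (stronglyMeasurable_condExp.aestronglyMeasurable.congr hs'.symm).mono hm
  exact integral_smul_eq_zero_of_condExp_ae_eq_zero hm hm₁ hfc hc (hf.integrable le_top)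
    ((hw.mono hm).smul (hs.sub hs'_meas)) hws (hws.smul_of_top_right hf)
    (condExp_smul_ae_eq_zero_of_condExp_ae_eq_zero hw (hs_int.sub hs'_int) hws
      (condExp_sub_ae_eq_zero_of_condExp_ae_eq
        (condExp_ae_eq_of_ae_eq_condExp le_rfl (hm.trans hm₁) hs').symm hs_int hs'_int))

lemma integral_smul_condExp_eq [IsFiniteMeasure μ] (hm : m ≤ m₁) (hm₁ : m₁ ≤ mΩ)
    {f c : Ω → ℝ} (hfc : μ[f|m₁] =ᵐ[μ] c) (hc : AEStronglyMeasurable[m] c μ) (hf : MemLp f ⊤ μ)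
    {s s' : Ω → E} (hs : AEStronglyMeasurable[m₁] s μ) (hs_int : Integrable s μ)
    (hs' : s' =ᵐ[μ] μ[s|m]) :
    ∫ ω, f ω • s' ω ∂μ = ∫ ω, f ω • s ω ∂μ := by
  have hs'_int : Integrable s' μ := integrable_condExp.congr hs'.symm
  have h := integral_smul_smul_sub_condExp_eq_zero (w := fun _ => 1) hm hm₁ hfc hc hf
    aestronglyMeasurable_const hs hs_int hs' ((hs_int.sub hs'_int).smul (1 : ℝ))
  simp only [one_smul, smul_sub] at h
  have hfs : Integrable (fun ω => f ω • s ω) μ := hs_int.smul_of_top_right hf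
  have hfs' : Integrable (fun ω => f ω • s' ω) μ := hs'_int.smul_of_top_right hf
  rw [eq_comm, ← sub_eq_zero, ← integral_sub hfs hfs', h]

end CondExp

theorem integral_doublyRobust_eq {Ω E : Type*} [NormedAddCommGroup E] [NormedSpace ℝ E]
    [CompleteSpace E] {mX m₂ m₁ mΩ : MeasurableSpace Ω} {μ : Measure[mΩ] Ω} [IsFiniteMeasure μ]
    (hmX : mX ≤ m₂) (hm₂ : m₂ ≤ m₁) (hm₁ : m₁ ≤ mΩ) {R p w h : Ω → ℝ} (hR : Measurable R)
    (hRbin : ∀ ω, R ω = 0 ∨ R ω = 1) (hMAR : μ[R|m₁] =ᵐ[μ] p)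
    (hp : AEStronglyMeasurable[mX] p μ) (hw : AEStronglyMeasurable[m₂] w μ)
    (hh : AEStronglyMeasurable[mX] h μ) {s mt m0 : Ω → E} (hs : AEStronglyMeasurable[m₁] s μ)
    (hs_int : Integrable s μ) (hmt : mt =ᵐ[μ] μ[s|m₂]) (hm0 : m0 =ᵐ[μ] μ[s|mX])
    (hws : Integrable (fun ω => w ω • (s ω - mt ω)) μ) {a b : ℝ}
    (hφ : Integrable (fun ω => (R ω / a) • (w ω • (s ω - mt ω)) + h ω • (mt ω - m0 ω)
      + ((1 - R ω) / b) • m0 ω) μ) :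
    ∫ ω, (R ω / a) • (w ω • (s ω - mt ω)) + h ω • (mt ω - m0 ω) + ((1 - R ω) / b) • m0 ω ∂μ
      = b⁻¹ • ∫ ω, (1 - R ω) • s ω ∂μ := by
  have hR_top : MemLp R ⊤ μ := memLp_top_of_bound hR.aestronglyMeasurable 1
    (ae_of_all _ fun ω => by rcases hRbin ω with hr | hr <;> simp [hr])
  have h1R_top : MemLp (fun ω => 1 - R ω) ⊤ μ := (memLp_top_const 1).sub hR_top
  have h1R : μ[fun ω => 1 - R ω|m₁] =ᵐ[μ] fun ω => 1 - p ω := by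
    have h_sub : μ[fun ω => 1 - R ω|m₁] =ᵐ[μ] μ[fun _ => (1 : ℝ)|m₁] - μ[R|m₁] :=
      condExp_sub (integrable_const 1) (hR_top.integrable le_top) m₁
    filter_upwards [h_sub, hMAR] with ω h_sub hω
    simp [h_sub, hω, condExp_const hm₁]
  have hT1 : ∫ ω, R ω • (w ω • (s ω - mt ω)) ∂μ = 0 :=
    integral_smul_smul_sub_condExp_eq_zero hm₂ hm₁ hMAR (hp.mono hmX) hR_top hw hs hs_int hmt
      hws
  have hT3 : ∫ ω, (1 - R ω) • m0 ω ∂μ = ∫ ω, (1 - R ω) • s ω ∂μ :=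
    integral_smul_condExp_eq (hmX.trans hm₂) hm₁ h1R (aestronglyMeasurable_const.sub hp) h1R_top
      hs hs_int hm0
  have hT1_int : Integrable (fun ω => a⁻¹ • R ω • w ω • (s ω - mt ω)) μ :=
    (hws.smul_of_top_right hR_top).smul a⁻¹
  have hT3_int : Integrable (fun ω => b⁻¹ • (1 - R ω) • m0 ω) μ :=
    ((integrable_condExp.congr hm0.symm).smul_of_top_right h1R_top).smul b⁻¹
  simp only [div_eq_inv_mul, mul_smul] at hφ ⊢
  have hT2_int : Integrable (fun ω => h ω • (mt ω - m0 ω)) μ := by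
    refine ((hφ.sub hT1_int).sub hT3_int).congr (ae_of_all _ fun ω => ?_)
    simp only [Pi.sub_apply]
    abel
  have hT2 : ∫ ω, h ω • (mt ω - m0 ω) ∂μ = 0 :=
    integral_smul_condExp_sub_condExp_eq_zero hmX (hm₂.trans hm₁) hh hmt hm0 hT2_int
  have hT12_int : Integrable
      (fun ω => a⁻¹ • R ω • w ω • (s ω - mt ω) + h ω • (mt ω - m0 ω)) μ :=
    hT1_int.add hT2_int
  rw [integral_add hT12_int hT3_int, integral_add hT1_int hT2_int, integral_smul,
    integral_smul, hT1, hT2, hT3, smul_zero, zero_add, zero_add]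

theorem stmt_10_general {Ω : Type*} [MeasurableSpace Ω] (μ : Measure Ω) [IsProbabilityMeasure μ]
    {d : ℕ} (R Y X Yh : Ω → ℝ)
    (hR : Measurable R) (hY : Measurable Y) (hX : Measurable X) (hYh : Measurable Yh)
    (hRbin : ∀ ω, R ω = 0 ∨ R ω = 1)
    (p0 : ℝ → ℝ) (hp0 : Measurable p0)
    (pl : ℝ)
    (hMAR : μ[R | MeasurableSpace.comap (fun ω => (Y ω, Yh ω, X ω)) inferInstance]
      =ᵐ[μ] fun ω => p0 (X ω))
    (wst : ℝ → ℝ) (hwst : Measurable wst)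
    (s0 : ℝ → ℝ → Fin d → ℝ) (hs0 : Measurable (Function.uncurry s0))
    (s mt m0 : Ω → Fin d → ℝ) (hs : s = fun ω => s0 (Y ω) (X ω))
    (hsInt : Integrable s μ)
    (hmt : mt =ᵐ[μ] μ[s | MeasurableSpace.comap (fun ω => (X ω, Yh ω)) inferInstance])
    (hm0 : m0 =ᵐ[μ] μ[s | MeasurableSpace.comap X inferInstance])
    (hwsts : Integrable (fun ω => wst (X ω) • (s ω - mt ω)) μ)
    (φ : Ω → Fin d → ℝ)
    (hφ : φ = fun ω => (R ω / pl) • (wst (X ω) • (s ω - mt ω))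
        + (wst (X ω) / (pl + (1 - pl) * wst (X ω))) • (mt ω - m0 ω)
        + ((1 - R ω) / (1 - pl)) • m0 ω)
    (hφInt : Integrable φ μ) :
    ∫ ω, φ ω ∂μ = (1 - pl)⁻¹ • ∫ ω, (1 - R ω) • s ω ∂μ := by
  subst hφ
  have hm₁ := (hY.prodMk (hYh.prodMk hX)).comap_le
  set m₁ := MeasurableSpace.comap (fun ω => (Y ω, Yh ω, X ω)) inferInstance
  set m₂ := MeasurableSpace.comap (fun ω => (X ω, Yh ω)) inferInstance
  set mX := MeasurableSpace.comap X inferInstance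
  have hm₂ : m₂ ≤ m₁ := Measurable.comap_le (m₁ := m₁) <|
    (measurable_snd.snd.prodMk measurable_snd.fst).comp (comap_measurable _)
  have hmX : mX ≤ m₂ := Measurable.comap_le (m₁ := m₂) <|
    measurable_fst.comp (comap_measurable _)
  have hX_mX : Measurable[mX] X := comap_measurable X
  have hs_m₁ : AEStronglyMeasurable[m₁] s μ := by
    rw [hs]
    exact (hs0.comp ((measurable_fst.prodMk measurable_snd.snd).comp
      (comap_measurable _))).aestronglyMeasurable
  have hh : Measurable[mX] fun ω => wst (X ω) / (pl + (1 - pl) * wst (X ω)) := by fun_prop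
  exact integral_doublyRobust_eq hmX hm₂ hm₁ hR hRbin hMAR
    (hp0.comp hX_mX).aestronglyMeasurable ((hwst.comp hX_mX).aestronglyMeasurable.mono hmX)
    hh.aestronglyMeasurable hs_m₁ hsInt hmt hm0 hwsts hφInt

theorem stmt_10 {Ω : Type*} [MeasurableSpace Ω] (μ : Measure Ω) [IsProbabilityMeasure μ]
    {d : ℕ} (R Y X Yh : Ω → ℝ)
    (hR : Measurable R) (hY : Measurable Y) (hX : Measurable X) (hYh : Measurable Yh)
    (hRbin : ∀ ω, R ω = 0 ∨ R ω = 1)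
    (p0 : ℝ → ℝ) (hp0 : Measurable p0) (hp0mem : ∀ x, p0 x ∈ Set.Ioo (0:ℝ) 1)
    (pl : ℝ) (hpl : pl = (μ {ω | R ω = 1}).toReal) (hplmem : pl ∈ Set.Ioo (0:ℝ) 1)
    (hMAR : μ[R | MeasurableSpace.comap (fun ω => (Y ω, Yh ω, X ω)) inferInstance]
      =ᵐ[μ] fun ω => p0 (X ω))
    (wst : ℝ → ℝ) (hwst : Measurable wst) (hwstpos : ∀ x, 0 < wst x)
    (s0 : ℝ → ℝ → Fin d → ℝ) (hs0 : Measurable (Function.uncurry s0))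
    (s mt m0 : Ω → Fin d → ℝ) (hs : s = fun ω => s0 (Y ω) (X ω))
    (hsInt : Integrable s μ)
    (hmt : mt =ᵐ[μ] μ[s | MeasurableSpace.comap (fun ω => (X ω, Yh ω)) inferInstance])
    (hm0 : m0 =ᵐ[μ] μ[s | MeasurableSpace.comap X inferInstance])
    (hmtInt : Integrable mt μ) (hm0Int : Integrable m0 μ)
    (hwsts : Integrable (fun ω => wst (X ω) • (s ω - mt ω)) μ)
    (hwsts2 : Integrable (fun ω => p0 (X ω) • (wst (X ω) • (s ω - mt ω))) μ)
    (φ : Ω → Fin d → ℝ)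
    (hφ : φ = fun ω => (R ω / pl) • (wst (X ω) • (s ω - mt ω))
        + (wst (X ω) / (pl + (1 - pl) * wst (X ω))) • (mt ω - m0 ω)
        + ((1 - R ω) / (1 - pl)) • m0 ω)
    (hφInt : Integrable φ μ) :
    ∫ ω, φ ω ∂μ = (1 - pl)⁻¹ • ∫ ω, (1 - R ω) • s ω ∂μ :=
  stmt_10_general μ R Y X Yh hR hY hX hYh hRbin p0 hp0 pl hMAR wst hwst s0 hs0 s mt m0 hs hsInt hmt
    hm0 hwsts φ hφ hφInt
end

section
/- In the scalar case with s(y,x;β) = y − β and target β₀ = E_q[Y]: the difference between the asymptotic variance without predictions and with predictions equals (1/(1−π)²)·E[((1−π₀(X))³/π₀(X))·(E[Y|X,Ŷ] − E[Y|X])²], which is nonnegative, and it is zero if and only if E[Y|X,Ŷ] = E[Y|X] almost surely. -/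
/-! Expand `(Y - m₀)² = (Y - m̃)² + (m̃ - m₀)² + 2 (m̃ - m₀)(Y - m̃)`. Every factor besides `R` is
`(Y, Ŷ, X)`-measurable, so missingness at random lets `R` be replaced by `π₀(X)` in each term. The
cross term then vanishes: `π₀(X) w₀(X)² (m̃ - m₀)` is `(X, Ŷ)`-measurable while `Y - m̃` has zero
conditional mean given `(X, Ŷ)`. What is left is `E[π₀ w₀² (m̃ - m₀)²]`, and
`π₀ w₀² = (π/(1-π))² (1-π₀)²/π₀ = (π/(1-π))² ((1-π₀)² + (1-π₀)³/π₀)`. The weight `(1-π₀)³/π₀` is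
positive, so the gain is zero exactly when `m̃ = m₀` almost everywhere. -/
open MeasureTheory

section CondExp

variable {Ω : Type*} {m m₀ : MeasurableSpace Ω} {μ : Measure Ω}

lemma condExp_mul_ae_eq_of_condExp_ae_eq {R π g : Ω → ℝ} (hR : Integrable R μ)
    (hRπ : μ[R|m] =ᵐ[μ] π) (hg : AEStronglyMeasurable[m] g μ)
    (hgR : Integrable (fun ω => g ω * R ω) μ) :
    μ[fun ω => g ω * R ω|m] =ᵐ[μ] fun ω => g ω * π ω := by
  filter_upwards [condExp_mul_of_aestronglyMeasurable_left hg hgR hR, hRπ] with ω hmul hω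
  exact hmul.trans (by rw [Pi.mul_apply, hω])

lemma integrable_mul_of_condExp_ae_eq {R π g : Ω → ℝ} (hR : Integrable R μ)
    (hRπ : μ[R|m] =ᵐ[μ] π) (hg : AEStronglyMeasurable[m] g μ)
    (hgR : Integrable (fun ω => g ω * R ω) μ) :
    Integrable (fun ω => g ω * π ω) μ :=
  integrable_condExp.congr (condExp_mul_ae_eq_of_condExp_ae_eq hR hRπ hg hgR)

variable [IsFiniteMeasure μ]

lemma integral_mul_eq_of_condExp_ae_eq (hm : m ≤ m₀) {R π g : Ω → ℝ} (hR : Integrable R μ)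
    (hRπ : μ[R|m] =ᵐ[μ] π) (hg : AEStronglyMeasurable[m] g μ)
    (hgR : Integrable (fun ω => g ω * R ω) μ) :
    ∫ ω, g ω * R ω ∂μ = ∫ ω, g ω * π ω ∂μ := by
  rw [← integral_condExp hm]
  exact integral_congr_ae (condExp_mul_ae_eq_of_condExp_ae_eq hR hRπ hg hgR)

lemma integral_mul_sub_condExp_eq_zero (hm : m ≤ m₀) {Y Yc G : Ω → ℝ} (hY : Integrable Y μ)
    (hYc : Yc =ᵐ[μ] μ[Y|m]) (hG : AEStronglyMeasurable[m] G μ)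
    (hGY : Integrable (fun ω => G ω * (Y ω - Yc ω)) μ) :
    ∫ ω, G ω * (Y ω - Yc ω) ∂μ = 0 := by
  have hYc_int : Integrable Yc μ := integrable_condExp.congr hYc.symm
  have hYc_cond : μ[Yc|m] =ᵐ[μ] μ[Y|m] :=
    (condExp_congr_ae hYc).trans (condExp_condExp_of_le le_rfl hm)
  have hres : μ[Y - Yc|m] =ᵐ[μ] 0 := by
    filter_upwards [condExp_sub hY hYc_int m, hYc_cond] with ω hsub hω
    simp [hsub, hω]
  rw [integral_mul_eq_of_condExp_ae_eq hm (R := fun ω => Y ω - Yc ω) (hY.sub hYc_int) hres hG hGY]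
  simp

lemma integral_mul_sq_sub_sub_integral_mul_sq_sub_condExp {m₂ m₃ : MeasurableSpace Ω}
    (hm₂₃ : m₂ ≤ m₃) (hm₃ : m₃ ≤ m₀) {R π Y w a b : Ω → ℝ} (hR : Integrable R μ) (hRπ : μ[R|m₃] =ᵐ[μ] π)
    (hπ : AEStronglyMeasurable[m₂] π μ) (hY : Integrable Y μ)
    (hYm : AEStronglyMeasurable[m₃] Y μ) (hw : AEStronglyMeasurable[m₂] w μ)
    (ha : AEStronglyMeasurable[m₂] a μ) (hb : b =ᵐ[μ] μ[Y|m₂])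
    (hYa : Integrable (fun ω => R ω * w ω ^ 2 * (Y ω - a ω) ^ 2) μ)
    (hYb : Integrable (fun ω => R ω * w ω ^ 2 * (Y ω - b ω) ^ 2) μ)
    (hba : Integrable (fun ω => R ω * w ω ^ 2 * (b ω - a ω) ^ 2) μ) :
    ∫ ω, R ω * w ω ^ 2 * (Y ω - a ω) ^ 2 ∂μ - ∫ ω, R ω * w ω ^ 2 * (Y ω - b ω) ^ 2 ∂μ
      = ∫ ω, π ω * w ω ^ 2 * (b ω - a ω) ^ 2 ∂μ := by
  have hbm : AEStronglyMeasurable[m₂] b μ :=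
    stronglyMeasurable_condExp.aestronglyMeasurable.congr hb.symm
  have hba_m₃ : AEStronglyMeasurable[m₃] (fun ω => w ω ^ 2 * (b ω - a ω) ^ 2) μ :=
    ((hw.pow 2).mul ((hbm.sub ha).pow 2)).mono hm₂₃
  have hcross_m₃ : AEStronglyMeasurable[m₃]
      (fun ω => w ω ^ 2 * (b ω - a ω) * (Y ω - b ω)) μ :=
    (((hw.pow 2).mul (hbm.sub ha)).mono hm₂₃).mul (hYm.sub (hbm.mono hm₂₃))
  have hcross : Integrable (fun ω => (w ω ^ 2 * (b ω - a ω) * (Y ω - b ω)) * R ω) μ := by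
    refine ((hYa.sub hYb).sub hba).div_const 2 |>.congr (ae_of_all _ fun ω => ?_)
    simp only [Pi.sub_apply]; ring
  have hsplit : ∫ ω, R ω * w ω ^ 2 * (Y ω - a ω) ^ 2 ∂μ
      = ∫ ω, R ω * w ω ^ 2 * (Y ω - b ω) ^ 2 ∂μ + ∫ ω, R ω * w ω ^ 2 * (b ω - a ω) ^ 2 ∂μ
        + 2 * ∫ ω, (w ω ^ 2 * (b ω - a ω) * (Y ω - b ω)) * R ω ∂μ := by
    rw [← integral_add hYb hba, ← integral_const_mul,
      ← integral_add (f := fun ω => R ω * w ω ^ 2 * (Y ω - b ω) ^ 2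
        + R ω * w ω ^ 2 * (b ω - a ω) ^ 2) (hYb.add hba) (hcross.const_mul 2)]
    congr 1; funext ω; ring
  have hcross_zero : ∫ ω, (w ω ^ 2 * (b ω - a ω) * (Y ω - b ω)) * R ω ∂μ = 0 := by
    rw [integral_mul_eq_of_condExp_ae_eq hm₃ hR hRπ hcross_m₃ hcross]
    have hπcross := integrable_mul_of_condExp_ae_eq hR hRπ hcross_m₃ hcross
    simp only [show ∀ ω, w ω ^ 2 * (b ω - a ω) * (Y ω - b ω) * π ω
      = π ω * w ω ^ 2 * (b ω - a ω) * (Y ω - b ω) from fun ω => by ring] at hπcross ⊢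
    exact integral_mul_sub_condExp_eq_zero (hm₂₃.trans hm₃) hY hb
      ((hπ.mul (hw.pow 2)).mul (hbm.sub ha)) hπcross
  have hsq : ∫ ω, R ω * w ω ^ 2 * (b ω - a ω) ^ 2 ∂μ
      = ∫ ω, π ω * w ω ^ 2 * (b ω - a ω) ^ 2 ∂μ := calc
    _ = ∫ ω, (w ω ^ 2 * (b ω - a ω) ^ 2) * R ω ∂μ := by congr 1; funext ω; ring
    _ = ∫ ω, (w ω ^ 2 * (b ω - a ω) ^ 2) * π ω ∂μ :=
      integral_mul_eq_of_condExp_ae_eq hm₃ hR hRπ hba_m₃ (hba.congr (ae_of_all _ fun ω => by ring))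
    _ = _ := by congr 1; funext ω; ring
  rw [hsplit, hcross_zero, hsq]
  ring

end CondExp

lemma mul_sq_mul_odds (c : ℝ) {p : ℝ} (hp : p ≠ 0) :
    p * (c * ((1 - p) / p)) ^ 2 = c ^ 2 * ((1 - p) ^ 2 + (1 - p) ^ 3 / p) := by
  field_simp
  ring

lemma sq_mul_odds_le (c : ℝ) {p ε : ℝ} (hε : 0 < ε) (hp : ε ≤ p) :
    (c * ((1 - p) / p)) ^ 2 ≤ (c / ε) ^ 2 * (1 - p) ^ 2 := by
  calc (c * ((1 - p) / p)) ^ 2 = c ^ 2 * (1 - p) ^ 2 / p ^ 2 := by ring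
    _ ≤ c ^ 2 * (1 - p) ^ 2 / ε ^ 2 := by gcongr
    _ = (c / ε) ^ 2 * (1 - p) ^ 2 := by ring

lemma integrable_mul_sq_mul_of_sq_le {Ω : Type*} [MeasurableSpace Ω] {μ : Measure Ω}
    {R w g D : Ω → ℝ} (K : ℝ) (hR : ∀ ω, R ω = 0 ∨ R ω = 1) (hRm : AEStronglyMeasurable R μ)
    (hwm : AEStronglyMeasurable w μ) (hDm : AEStronglyMeasurable D μ)
    (hw : ∀ ω, w ω ^ 2 ≤ K * g ω) (hD : ∀ ω, 0 ≤ D ω) (hgD : Integrable (fun ω => g ω * D ω) μ) :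
    Integrable (fun ω => R ω * w ω ^ 2 * D ω) μ := by
  refine (hgD.const_mul K).mono' ((hRm.mul (hwm.pow 2)).mul hDm) (ae_of_all _ fun ω => ?_)
  have hKgD : 0 ≤ K * g ω * D ω := mul_nonneg ((sq_nonneg _).trans (hw ω)) (hD ω)
  rw [← mul_assoc]
  rcases hR ω with h | h
  · simpa [h] using hKgD
  · rw [h, one_mul, Real.norm_of_nonneg (mul_nonneg (sq_nonneg _) (hD ω))]
    exact mul_le_mul_of_nonneg_right (hw ω) (hD ω)

lemma integral_mul_sq_sub_eq_zero_iff {Ω : Type*} [MeasurableSpace Ω] {μ : Measure Ω}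
    {c u v : Ω → ℝ} (hc : ∀ ω, 0 < c ω) (hi : Integrable (fun ω => c ω * (u ω - v ω) ^ 2) μ) :
    ∫ ω, c ω * (u ω - v ω) ^ 2 ∂μ = 0 ↔ u =ᵐ[μ] v := by
  rw [integral_eq_zero_iff_of_nonneg (fun ω => mul_nonneg (hc ω).le (sq_nonneg _)) hi]
  refine Filter.eventually_congr (ae_of_all _ fun ω => ?_)
  simp [(hc ω).ne', sub_eq_zero]

theorem stmt_12_general {Ω : Type*} [MeasurableSpace Ω] (μ : Measure Ω) [IsProbabilityMeasure μ]
    (R Y X Yh : Ω → ℝ)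
    (hR : Measurable R) (hY : Measurable Y) (hX : Measurable X) (hYh : Measurable Yh)
    (hRbin : ∀ ω, R ω = 0 ∨ R ω = 1)
    (p0 : ℝ → ℝ) (hp0 : Measurable p0)
    (ε : ℝ) (hε : 0 < ε) (hp0mem : ∀ x, ε ≤ p0 x ∧ p0 x ≤ 1 - ε)
    (pl : ℝ) (hplmem : pl ∈ Set.Ioo (0:ℝ) 1)
    (w0 : ℝ → ℝ) (hw0 : ∀ x, w0 x = (pl / (1 - pl)) * ((1 - p0 x) / p0 x))
    (hMAR : μ[R | MeasurableSpace.comap (fun ω => (Y ω, Yh ω, X ω)) inferInstance]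
      =ᵐ[μ] fun ω => p0 (X ω))
    (hYL2 : MemLp Y 2 μ)
    (mtY m0Y : Ω → ℝ)
    (hmt : mtY =ᵐ[μ] μ[Y | MeasurableSpace.comap (fun ω => (X ω, Yh ω)) inferInstance])
    (hm0 : m0Y =ᵐ[μ] μ[Y | MeasurableSpace.comap X inferInstance])
    (b0 : ℝ)
    (hI1 : Integrable (fun ω => R ω * (w0 (X ω))^2 * (Y ω - m0Y ω)^2) μ)
    (hI2 : Integrable (fun ω => R ω * (w0 (X ω))^2 * (Y ω - mtY ω)^2) μ)
    (hI3 : Integrable (fun ω => (1 - p0 (X ω))^2 * (mtY ω - m0Y ω)^2) μ)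
    (hI5 : Integrable (fun ω => ((1 - p0 (X ω))^3 / p0 (X ω)) * (mtY ω - m0Y ω)^2) μ) :
    (((1/pl^2) * ∫ ω, R ω * (w0 (X ω))^2 * (Y ω - m0Y ω)^2 ∂μ
        + (1/(1-pl)^2) * ∫ ω, (1 - R ω) * (m0Y ω - b0)^2 ∂μ)
      - ((1/pl^2) * ∫ ω, R ω * (w0 (X ω))^2 * (Y ω - mtY ω)^2 ∂μ
        + (1/(1-pl)^2) * ∫ ω, (1 - p0 (X ω))^2 * (mtY ω - m0Y ω)^2 ∂μ
        + (1/(1-pl)^2) * ∫ ω, (1 - R ω) * (m0Y ω - b0)^2 ∂μ)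
      = (1/(1-pl)^2) * ∫ ω, ((1 - p0 (X ω))^3 / p0 (X ω)) * (mtY ω - m0Y ω)^2 ∂μ)
    ∧ (0 ≤ (1/(1-pl)^2) * ∫ ω, ((1 - p0 (X ω))^3 / p0 (X ω)) * (mtY ω - m0Y ω)^2 ∂μ)
    ∧ ((1/(1-pl)^2) * ∫ ω, ((1 - p0 (X ω))^3 / p0 (X ω)) * (mtY ω - m0Y ω)^2 ∂μ = 0
        ↔ mtY =ᵐ[μ] m0Y) := by
  obtain ⟨hpl0, hpl1⟩ := hplmem
  have hp0pos : ∀ x, 0 < p0 x := fun x => hε.trans_le (hp0mem x).1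
  have hweight : ∀ ω, 0 < (1 - p0 (X ω)) ^ 3 / p0 (X ω) := fun ω =>
    div_pos (pow_pos (by linarith [hp0mem (X ω)]) 3) (hp0pos _)
  have hXm₂ : Measurable[MeasurableSpace.comap (fun ω => (X ω, Yh ω)) inferInstance] X :=
    measurable_fst.comp (comap_measurable _)
  have hm₂₃ : MeasurableSpace.comap (fun ω => (X ω, Yh ω)) inferInstance
      ≤ MeasurableSpace.comap (fun ω => (Y ω, Yh ω, X ω)) inferInstance :=
    ((by fun_prop : Measurable fun t : ℝ × ℝ × ℝ => (t.2.2, t.2.1)).comp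
      (comap_measurable fun ω => (Y ω, Yh ω, X ω))).comap_le
  have hw0m : Measurable w0 := by rw [funext hw0]; fun_prop
  have hRint : Integrable R μ := (integrable_const (1 : ℝ)).mono' hR.aestronglyMeasurable
    (ae_of_all _ fun ω => by rcases hRbin ω with h | h <;> simp [h])
  have hba := integrable_mul_sq_mul_of_sq_le (w := fun ω => w0 (X ω))
    (D := fun ω => (mtY ω - m0Y ω) ^ 2) ((pl / (1 - pl) / ε) ^ 2) hRbin hR.aestronglyMeasurable
    (hw0m.comp hX).aestronglyMeasurable
    (((integrable_condExp.congr hmt.symm).aestronglyMeasurable.sub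
      (integrable_condExp.congr hm0.symm).aestronglyMeasurable).pow 2)
    (fun ω => by rw [hw0]; exact sq_mul_odds_le _ hε (hp0mem _).1) (fun ω => sq_nonneg _) hI3
  have hgain := integral_mul_sq_sub_sub_integral_mul_sq_sub_condExp (w := fun ω => w0 (X ω)) hm₂₃
    (hY.prodMk (hYh.prodMk hX)).comap_le hRint hMAR (hp0.comp hXm₂).aestronglyMeasurable
    (hYL2.integrable one_le_two) (measurable_fst.comp (comap_measurable _)).aestronglyMeasurable
    (hw0m.comp hXm₂).aestronglyMeasurable
    ((stronglyMeasurable_condExp.mono hXm₂.comap_le).aestronglyMeasurable.congr hm0.symm)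
    hmt hI1 hI2 hba
  have hrhs : ∫ ω, p0 (X ω) * w0 (X ω) ^ 2 * (mtY ω - m0Y ω) ^ 2 ∂μ = (pl / (1 - pl)) ^ 2 *
      (∫ ω, (1 - p0 (X ω)) ^ 2 * (mtY ω - m0Y ω) ^ 2 ∂μ
        + ∫ ω, (1 - p0 (X ω)) ^ 3 / p0 (X ω) * (mtY ω - m0Y ω) ^ 2 ∂μ) := by
    rw [← integral_add hI3 hI5, ← integral_const_mul]
    congr 1; funext ω
    rw [hw0, mul_sq_mul_odds _ (hp0pos _).ne']; ring
  refine ⟨?_, mul_nonneg (by positivity) (integral_nonneg fun ω =>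
    mul_nonneg (hweight ω).le (sq_nonneg _)), ?_⟩
  · linear_combination (norm := skip) (1 / pl ^ 2) * hgain.trans hrhs
    field_simp
    ring
  · rw [mul_eq_zero, or_iff_right (by positivity),
      integral_mul_sq_sub_eq_zero_iff hweight hI5]

theorem stmt_12 {Ω : Type*} [MeasurableSpace Ω] (μ : Measure Ω) [IsProbabilityMeasure μ]
    (R Y X Yh : Ω → ℝ)
    (hR : Measurable R) (hY : Measurable Y) (hX : Measurable X) (hYh : Measurable Yh)
    (hRbin : ∀ ω, R ω = 0 ∨ R ω = 1)
    (p0 : ℝ → ℝ) (hp0 : Measurable p0)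
    (ε : ℝ) (hε : 0 < ε) (hp0mem : ∀ x, ε ≤ p0 x ∧ p0 x ≤ 1 - ε)
    (pl : ℝ) (hpl : pl = (μ {ω | R ω = 1}).toReal) (hplmem : pl ∈ Set.Ioo (0:ℝ) 1)
    (w0 : ℝ → ℝ) (hw0 : ∀ x, w0 x = (pl / (1 - pl)) * ((1 - p0 x) / p0 x))
    (hMAR : μ[R | MeasurableSpace.comap (fun ω => (Y ω, Yh ω, X ω)) inferInstance]
      =ᵐ[μ] fun ω => p0 (X ω))
    (hYL2 : MemLp Y 2 μ)
    (mtY m0Y : Ω → ℝ)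
    (hmt : mtY =ᵐ[μ] μ[Y | MeasurableSpace.comap (fun ω => (X ω, Yh ω)) inferInstance])
    (hm0 : m0Y =ᵐ[μ] μ[Y | MeasurableSpace.comap X inferInstance])
    (b0 : ℝ) (hb0 : b0 = (1 - pl)⁻¹ * ∫ ω, (1 - R ω) * Y ω ∂μ)
    (hI1 : Integrable (fun ω => R ω * (w0 (X ω))^2 * (Y ω - m0Y ω)^2) μ)
    (hI2 : Integrable (fun ω => R ω * (w0 (X ω))^2 * (Y ω - mtY ω)^2) μ)
    (hI3 : Integrable (fun ω => (1 - p0 (X ω))^2 * (mtY ω - m0Y ω)^2) μ)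
    (hI4 : Integrable (fun ω => (1 - R ω) * (m0Y ω - b0)^2) μ)
    (hI5 : Integrable (fun ω => ((1 - p0 (X ω))^3 / p0 (X ω)) * (mtY ω - m0Y ω)^2) μ) :
    (((1/pl^2) * ∫ ω, R ω * (w0 (X ω))^2 * (Y ω - m0Y ω)^2 ∂μ
        + (1/(1-pl)^2) * ∫ ω, (1 - R ω) * (m0Y ω - b0)^2 ∂μ)
      - ((1/pl^2) * ∫ ω, R ω * (w0 (X ω))^2 * (Y ω - mtY ω)^2 ∂μ
        + (1/(1-pl)^2) * ∫ ω, (1 - p0 (X ω))^2 * (mtY ω - m0Y ω)^2 ∂μ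
        + (1/(1-pl)^2) * ∫ ω, (1 - R ω) * (m0Y ω - b0)^2 ∂μ)
      = (1/(1-pl)^2) * ∫ ω, ((1 - p0 (X ω))^3 / p0 (X ω)) * (mtY ω - m0Y ω)^2 ∂μ)
    ∧ (0 ≤ (1/(1-pl)^2) * ∫ ω, ((1 - p0 (X ω))^3 / p0 (X ω)) * (mtY ω - m0Y ω)^2 ∂μ)
    ∧ ((1/(1-pl)^2) * ∫ ω, ((1 - p0 (X ω))^3 / p0 (X ω)) * (mtY ω - m0Y ω)^2 ∂μ = 0
        ↔ mtY =ᵐ[μ] m0Y) :=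
  stmt_12_general μ R Y X Yh hR hY hX hYh hRbin p0 hp0 ε hε hp0mem pl hplmem w0 hw0 hMAR hYL2 mtY
    m0Y hmt hm0 b0 hI1 hI2 hI3 hI5
end

section
/- Under P(R=1|Y,Ŷ,X) = π₀(X) with target parameter in the combined population: the difference between the efficiency bounds without and with predictions equals Γ·E[((1−π₀(X))/π₀(X))·(h̃₀(X,Ŷ) − h₀(X))⊗²]·Γ, which is positive semidefinite; here V_wo = E[(R/π₀(X)²)(u − h̃₀)⊗²] + E[(R/π₀(X)²)(h̃₀ − h₀)⊗²] + E[h₀⊗²] and V_w = E[(R/π₀(X)²)(u − h̃₀)⊗²] + E[(h̃₀ − h₀)⊗²] + E[h₀⊗²]. -/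
/-! The two bounds differ only in their middle terms, so the identity reduces entrywise to
`E[(R/π₀²) g] - E[g] = E[((1 - π₀)/π₀) g]` for `g = (h̃₀ - h₀)ᵢ (h̃₀ - h₀)ⱼ`. As `g/π₀²` is
`σ(Y, Ŷ, X)`-measurable, the tower property and the MAR assumption `E[R | Y, Ŷ, X] = π₀(X)` replace
`R` by `π₀(X)` in the first expectation. The difference is a Gram matrix with the nonnegative weight
`(1 - π₀)/π₀`, hence positive semidefinite, and so is its congruence by the symmetric `Γ`. -/

open MeasureTheory

namespace MeasureTheory

variable {Ω : Type*} {m m₀ : MeasurableSpace Ω} {μ : Measure Ω}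

theorem integrable_of_condExp_ae_eq_of_ne_zero [NeZero μ] {E : Type*} [NormedAddCommGroup E]
    [NormedSpace ℝ E] [CompleteSpace E] {f p : Ω → E} (hfp : μ[f | m] =ᵐ[μ] p)
    (hp : ∀ ω, p ω ≠ 0) : Integrable f μ := by
  by_contra hf
  rw [condExp_of_not_integrable hf] at hfp
  obtain ⟨ω, hω⟩ := hfp.exists
  exact hp ω hω.symm

theorem integral_mul_eq_integral_mul_of_condExp_ae_eq (hm : m ≤ m₀) [SigmaFinite (μ.trim hm)]
    {R p w : Ω → ℝ} (hRp : μ[R | m] =ᵐ[μ] p) (hR : Integrable R μ)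
    (hw : AEStronglyMeasurable[m] w μ) (hwR : Integrable (fun ω => w ω * R ω) μ) :
    ∫ ω, w ω * R ω ∂μ = ∫ ω, w ω * p ω ∂μ :=
  calc ∫ ω, w ω * R ω ∂μ = ∫ ω, (μ[w * R | m]) ω ∂μ := (integral_condExp hm).symm
    _ = ∫ ω, w ω * p ω ∂μ :=
      integral_congr_ae ((condExp_mul_of_aestronglyMeasurable_left hw hwR hR).trans
        ((Filter.EventuallyEq.refl _ w).mul hRp))

theorem integral_div_sq_mul_sub_integral (hm : m ≤ m₀) [SigmaFinite (μ.trim hm)]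
    {R p g : Ω → ℝ} (hRp : μ[R | m] =ᵐ[μ] p) (hR : Integrable R μ)
    (hp : Measurable[m] p) (hp0 : ∀ ω, p ω ≠ 0) (hg : AEStronglyMeasurable[m] g μ)
    (hRg : Integrable (fun ω => R ω / p ω ^ 2 * g ω) μ) (hg_int : Integrable g μ)
    (hpg : Integrable (fun ω => (1 - p ω) / p ω * g ω) μ) :
    ∫ ω, R ω / p ω ^ 2 * g ω ∂μ - ∫ ω, g ω ∂μ = ∫ ω, (1 - p ω) / p ω * g ω ∂μ := by
  have hRg' : (fun ω => R ω / p ω ^ 2 * g ω) = fun ω => g ω / p ω ^ 2 * R ω := by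
    ext ω; ring
  have hsplit : (fun ω => g ω / p ω ^ 2 * p ω) = fun ω => (1 - p ω) / p ω * g ω + g ω := by
    ext ω
    have := hp0 ω
    field_simp
    ring
  rw [hRg', integral_mul_eq_integral_mul_of_condExp_ae_eq (w := fun ω => g ω / p ω ^ 2)
      hm hRp hR (hg.div₀ (hp.pow_const 2).aestronglyMeasurable) (hRg' ▸ hRg),
    hsplit, integral_add hpg hg_int, add_sub_cancel_right]

end MeasureTheory

namespace Matrix

variable {Ω n : Type*} [MeasurableSpace Ω] {μ : Measure Ω} [Fintype n]

theorem posSemidef_of_integral_mul_mul {c : Ω → ℝ} {f : Ω → n → ℝ} (hc : 0 ≤ᵐ[μ] c)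
    (hint : ∀ i j, Integrable (fun ω => c ω * (f ω i * f ω j)) μ) :
    (Matrix.of fun i j => ∫ ω, c ω * (f ω i * f ω j) ∂μ).PosSemidef := by
  refine PosSemidef.of_dotProduct_mulVec_nonneg ?_ fun x => ?_
  · ext i j
    simp only [conjTranspose_apply, of_apply, star_trivial, mul_comm (f _ i)]
  · have hpoint : ∀ ω, c ω * (∑ i, x i * f ω i) ^ 2
        = ∑ i, ∑ j, x i * (c ω * (f ω i * f ω j) * x j) := by
      intro ω
      rw [sq, Finset.sum_mul_sum, Finset.mul_sum]
      refine Finset.sum_congr rfl fun i _ => ?_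
      rw [Finset.mul_sum]
      exact Finset.sum_congr rfl fun j _ => by ring
    have hint' : ∀ i j, Integrable (fun ω => x i * (c ω * (f ω i * f ω j) * x j)) μ :=
      fun i j => ((hint i j).mul_const (x j)).const_mul (x i)
    have hquad : star x ⬝ᵥ ((Matrix.of fun i j => ∫ ω, c ω * (f ω i * f ω j) ∂μ) *ᵥ x)
        = ∫ ω, c ω * (∑ i, x i * f ω i) ^ 2 ∂μ := by
      simp only [hpoint, dotProduct, mulVec, of_apply, star_trivial, Finset.mul_sum,
        ← integral_mul_const, ← integral_const_mul]
      rw [integral_finsetSum _ fun i _ => integrable_finsetSum _ fun j _ => hint' i j]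
      exact Finset.sum_congr rfl fun i _ => (integral_finsetSum _ fun j _ => hint' i j).symm
    rw [hquad]
    exact integral_nonneg_of_ae (hc.mono fun ω hω => mul_nonneg hω (sq_nonneg _))

end Matrix

theorem stmt_14_general {Ω : Type*} [MeasurableSpace Ω] (μ : Measure Ω) [IsProbabilityMeasure μ]
    {d : ℕ} (R Y X Yh : Ω → ℝ)
    (hY : Measurable Y) (hX : Measurable X) (hYh : Measurable Yh)
    (p0 : ℝ → ℝ) (hp0 : Measurable p0) (hp0mem : ∀ x, p0 x ∈ Set.Ioo (0:ℝ) 1)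
    (hMAR : μ[R | MeasurableSpace.comap (fun ω => (Y ω, Yh ω, X ω)) inferInstance]
      =ᵐ[μ] fun ω => p0 (X ω))
    (u ht h0 : Ω → Fin d → ℝ)
    (hht : ht =ᵐ[μ] μ[u | MeasurableSpace.comap (fun ω => (X ω, Yh ω)) inferInstance])
    (hh0 : h0 =ᵐ[μ] μ[u | MeasurableSpace.comap X inferInstance])
    (hI2 : ∀ i j, Integrable
      (fun ω => (R ω / (p0 (X ω))^2) * ((ht ω i - h0 ω i) * (ht ω j - h0 ω j))) μ)
    (hI3 : ∀ i j, Integrable (fun ω => (ht ω i - h0 ω i) * (ht ω j - h0 ω j)) μ)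
    (hI5 : ∀ i j, Integrable
      (fun ω => ((1 - p0 (X ω)) / p0 (X ω)) * ((ht ω i - h0 ω i) * (ht ω j - h0 ω j))) μ)
    (Γ : Matrix (Fin d) (Fin d) ℝ) (hΓsymm : Γ.IsSymm) :
    (Γ * (Matrix.of fun i j =>
        (∫ ω, (R ω / (p0 (X ω))^2) * ((u ω i - ht ω i) * (u ω j - ht ω j)) ∂μ)
        + (∫ ω, (R ω / (p0 (X ω))^2) * ((ht ω i - h0 ω i) * (ht ω j - h0 ω j)) ∂μ)
        + (∫ ω, h0 ω i * h0 ω j ∂μ)) * Γ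
      - Γ * (Matrix.of fun i j =>
        (∫ ω, (R ω / (p0 (X ω))^2) * ((u ω i - ht ω i) * (u ω j - ht ω j)) ∂μ)
        + (∫ ω, (ht ω i - h0 ω i) * (ht ω j - h0 ω j) ∂μ)
        + (∫ ω, h0 ω i * h0 ω j ∂μ)) * Γ
      = Γ * (Matrix.of fun i j =>
        ∫ ω, ((1 - p0 (X ω)) / p0 (X ω)) * ((ht ω i - h0 ω i) * (ht ω j - h0 ω j)) ∂μ) * Γ)
    ∧ Matrix.PosSemidef (Γ * (Matrix.of fun i j =>
        ∫ ω, ((1 - p0 (X ω)) / p0 (X ω)) * ((ht ω i - h0 ω i) * (ht ω j - h0 ω j)) ∂μ) * Γ) := by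
  set V : Ω → ℝ × ℝ × ℝ := fun ω => (Y ω, Yh ω, X ω)
  have hm : MeasurableSpace.comap V inferInstance ≤ _ := (hY.prodMk (hYh.prodMk hX)).comap_le
  have hV : Measurable[MeasurableSpace.comap V inferInstance] V := comap_measurable V
  have hp_ne : ∀ ω, p0 (X ω) ≠ 0 := fun ω => (hp0mem (X ω)).1.ne'
  have hR : Integrable R μ := integrable_of_condExp_ae_eq_of_ne_zero hMAR hp_ne
  have hp : Measurable[MeasurableSpace.comap V inferInstance] fun ω => p0 (X ω) :=
    hp0.comp (measurable_snd.snd.comp hV)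
  have hdiff : AEStronglyMeasurable[MeasurableSpace.comap V inferInstance]
      (fun ω => ht ω - h0 ω) μ := by
    have h2 : MeasurableSpace.comap (fun ω => (X ω, Yh ω)) inferInstance
        ≤ MeasurableSpace.comap V inferInstance :=
      ((measurable_snd.snd.prodMk measurable_snd.fst).comp hV).comap_le
    have h1 : MeasurableSpace.comap X inferInstance ≤ MeasurableSpace.comap V inferInstance :=
      (measurable_snd.snd.comp hV).comap_le
    exact ((stronglyMeasurable_condExp.mono h2).aestronglyMeasurable.congr hht.symm).sub
      ((stronglyMeasurable_condExp.mono h1).aestronglyMeasurable.congr hh0.symm)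
  refine ⟨?_, ?_⟩
  · rw [← Matrix.sub_mul, ← Matrix.mul_sub]
    congr 2
    ext i j
    simp only [Matrix.sub_apply, Matrix.of_apply, add_sub_add_right_eq_sub,
      add_sub_add_left_eq_sub]
    exact integral_div_sq_mul_sub_integral hm hMAR hR hp hp_ne
      (((continuous_apply i).comp_aestronglyMeasurable hdiff).mul
        ((continuous_apply j).comp_aestronglyMeasurable hdiff)) (hI2 i j) (hI3 i j) (hI5 i j)
  · have hweight : ∀ ω, 0 ≤ (1 - p0 (X ω)) / p0 (X ω) := fun ω =>
      div_nonneg (sub_nonneg.2 (hp0mem (X ω)).2.le) (hp0mem (X ω)).1.le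
    simpa only [Matrix.conjTranspose_eq_transpose_of_trivial, hΓsymm.eq] using
      (Matrix.posSemidef_of_integral_mul_mul (f := fun ω i => ht ω i - h0 ω i)
        (ae_of_all μ hweight) hI5).mul_mul_conjTranspose_same Γ

theorem stmt_14 {Ω : Type*} [MeasurableSpace Ω] (μ : Measure Ω) [IsProbabilityMeasure μ]
    {d : ℕ} (R Y X Yh : Ω → ℝ)
    (hR : Measurable R) (hY : Measurable Y) (hX : Measurable X) (hYh : Measurable Yh)
    (hRbin : ∀ ω, R ω = 0 ∨ R ω = 1)
    (p0 : ℝ → ℝ) (hp0 : Measurable p0) (hp0mem : ∀ x, p0 x ∈ Set.Ioo (0:ℝ) 1)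
    (hMAR : μ[R | MeasurableSpace.comap (fun ω => (Y ω, Yh ω, X ω)) inferInstance]
      =ᵐ[μ] fun ω => p0 (X ω))
    (u0 : ℝ → ℝ → Fin d → ℝ) (hu0 : Measurable (Function.uncurry u0))
    (u ht h0 : Ω → Fin d → ℝ) (hu : u = fun ω => u0 (Y ω) (X ω))
    (huL2 : MemLp u 2 μ)
    (hht : ht =ᵐ[μ] μ[u | MeasurableSpace.comap (fun ω => (X ω, Yh ω)) inferInstance])
    (hh0 : h0 =ᵐ[μ] μ[u | MeasurableSpace.comap X inferInstance])
    (hI1 : ∀ i j, Integrable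
      (fun ω => (R ω / (p0 (X ω))^2) * ((u ω i - ht ω i) * (u ω j - ht ω j))) μ)
    (hI2 : ∀ i j, Integrable
      (fun ω => (R ω / (p0 (X ω))^2) * ((ht ω i - h0 ω i) * (ht ω j - h0 ω j))) μ)
    (hI3 : ∀ i j, Integrable (fun ω => (ht ω i - h0 ω i) * (ht ω j - h0 ω j)) μ)
    (hI4 : ∀ i j, Integrable (fun ω => h0 ω i * h0 ω j) μ)
    (hI5 : ∀ i j, Integrable
      (fun ω => ((1 - p0 (X ω)) / p0 (X ω)) * ((ht ω i - h0 ω i) * (ht ω j - h0 ω j))) μ)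
    (Γ : Matrix (Fin d) (Fin d) ℝ) (hΓsymm : Γ.IsSymm) (hΓinv : IsUnit Γ.det) :
    (Γ * (Matrix.of fun i j =>
        (∫ ω, (R ω / (p0 (X ω))^2) * ((u ω i - ht ω i) * (u ω j - ht ω j)) ∂μ)
        + (∫ ω, (R ω / (p0 (X ω))^2) * ((ht ω i - h0 ω i) * (ht ω j - h0 ω j)) ∂μ)
        + (∫ ω, h0 ω i * h0 ω j ∂μ)) * Γ
      - Γ * (Matrix.of fun i j =>
        (∫ ω, (R ω / (p0 (X ω))^2) * ((u ω i - ht ω i) * (u ω j - ht ω j)) ∂μ)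
        + (∫ ω, (ht ω i - h0 ω i) * (ht ω j - h0 ω j) ∂μ)
        + (∫ ω, h0 ω i * h0 ω j ∂μ)) * Γ
      = Γ * (Matrix.of fun i j =>
        ∫ ω, ((1 - p0 (X ω)) / p0 (X ω)) * ((ht ω i - h0 ω i) * (ht ω j - h0 ω j)) ∂μ) * Γ)
    ∧ Matrix.PosSemidef (Γ * (Matrix.of fun i j =>
        ∫ ω, ((1 - p0 (X ω)) / p0 (X ω)) * ((ht ω i - h0 ω i) * (ht ω j - h0 ω j)) ∂μ) * Γ) :=
  stmt_14_general μ R Y X Yh hY hX hYh p0 hp0 hp0mem hMAR u ht h0 hht hh0 hI2 hI3 hI5 Γ hΓsymm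
end
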